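/- Let R and S be rings with local units and let P be an R-S-bimodule. If P is a locally projective left R-module and Pf is a finitely generated left R-module for each idempotent f ∈ S, then the functor RHom_S(G_P,−) : SMod → RMod is a right adjoint of the functor SHom_R(P,−) : RMod → SMod, where G_P = SHom_R(P,R). -/

import Mathlib

set_option linter.unusedVariables false

/-! ### Core: non-unital rings with local units, modules, homomorphisms, categories -/

universe u v w

open MulOpposite CategoryTheory

/-- A ring with local units: every finite subset is contained in a subring
of the form `eRe` for an idempotent `e`; equivalently, every finite subset
admits an idempotent acting as a two-sided identity on it. -/
class HasLocalUnits (R : Type u) [NonUnitalRing R] : Prop where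
  exists_unit : ∀ s : Finset R, ∃ e : R, e * e = e ∧ ∀ x ∈ s, e * x = x ∧ x * e = x

/-- A (left) module over a non-unital ring. -/
class LMod (R : Type u) [NonUnitalRing R] (M : Type v) [AddCommGroup M] extends SMul R M where
  smul_add' : ∀ (r : R) (m n : M), r • (m + n) = r • m + r • n
  add_smul' : ∀ (r s : R) (m : M), (r + s) • m = r • m + s • m
  mul_smul' : ∀ (r s : R) (m : M), (r * s) • m = r • (s • m)

section basic
variable {R : Type u} [NonUnitalRing R] {M : Type v} [AddCommGroup M] [LMod R M]

theorem LMod.smul_zero' (r : R) : r • (0 : M) = 0 := by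
  have h := LMod.smul_add' r (0 : M) 0
  rw [add_zero] at h
  have h2 : r • (0 : M) + r • (0 : M) = r • (0 : M) + 0 := by rw [← h, add_zero]
  exact add_left_cancel h2

theorem LMod.zero_smul' (m : M) : (0 : R) • m = 0 := by
  have h := LMod.add_smul' (0 : R) 0 m
  rw [add_zero] at h
  have h2 : (0 : R) • m + (0 : R) • m = (0 : R) • m + 0 := by rw [← h, add_zero]
  exact add_left_cancel h2

theorem LMod.smul_neg' (r : R) (m : M) : r • (-m) = -(r • m) := by
  have h : r • m + r • (-m) = 0 := by
    rw [← LMod.smul_add' r m (-m), add_neg_cancel, LMod.smul_zero']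
  exact eq_neg_of_add_eq_zero_right h

end basic

/-- `f : M → N` is a homomorphism of (non-unital) `R`-modules. -/
structure IsLHom (R : Type u) [NonUnitalRing R] {M : Type v} {N : Type w}
    [AddCommGroup M] [AddCommGroup N] [LMod R M] [LMod R N] (f : M → N) : Prop where
  map_add : ∀ x y, f (x + y) = f x + f y
  map_smul : ∀ (r : R) (x : M), f (r • x) = r • f x

theorem IsLHom.map_zero {R : Type u} [NonUnitalRing R] {M : Type v} {N : Type w}
    [AddCommGroup M] [AddCommGroup N] [LMod R M] [LMod R N] {f : M → N}
    (hf : IsLHom R f) : f 0 = 0 := by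
  have h := hf.map_add 0 0
  rw [add_zero] at h
  have h2 : f 0 + f 0 = f 0 + 0 := by rw [← h, add_zero]
  exact add_left_cancel h2

theorem IsLHom.map_neg {R : Type u} [NonUnitalRing R] {M : Type v} {N : Type w}
    [AddCommGroup M] [AddCommGroup N] [LMod R M] [LMod R N] {f : M → N}
    (hf : IsLHom R f) (x : M) : f (-x) = -(f x) := by
  have h : f x + f (-x) = 0 := by rw [← hf.map_add, add_neg_cancel, hf.map_zero]
  exact eq_neg_of_add_eq_zero_right h

/-- The type of homomorphisms of (non-unital) `R`-modules. -/
def LinMap (R : Type u) [NonUnitalRing R] (M : Type v) (N : Type w)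
    [AddCommGroup M] [AddCommGroup N] [LMod R M] [LMod R N] : Type (max v w) :=
  {f : M → N // IsLHom R f}

namespace LinMap

variable {R : Type u} [NonUnitalRing R] {M : Type v} {N : Type w}
    [AddCommGroup M] [AddCommGroup N] [LMod R M] [LMod R N]

theorem ext {f g : LinMap R M N} (h : f.1 = g.1) : f = g := Subtype.ext h

instance : Add (LinMap R M N) :=
  ⟨fun f g => ⟨fun x => f.1 x + g.1 x,
    ⟨fun x y => by rw [f.2.map_add, g.2.map_add]; abel,
     fun r x => by rw [f.2.map_smul, g.2.map_smul, LMod.smul_add']⟩⟩⟩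

instance : Zero (LinMap R M N) :=
  ⟨⟨fun _ => 0, ⟨fun _ _ => by rw [add_zero], fun r _ => (LMod.smul_zero' r).symm⟩⟩⟩

instance : Neg (LinMap R M N) :=
  ⟨fun f => ⟨fun x => -(f.1 x),
    ⟨fun x y => by rw [f.2.map_add]; abel,
     fun r x => by rw [f.2.map_smul, LMod.smul_neg']⟩⟩⟩

instance : AddCommGroup (LinMap R M N) where
  add_assoc f g h := ext (funext fun x => add_assoc _ _ _)
  zero_add f := ext (funext fun x => zero_add _)
  add_zero f := ext (funext fun x => add_zero _)
  add_comm f g := ext (funext fun x => add_comm _ _)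
  neg_add_cancel f := ext (funext fun x => neg_add_cancel _)
  nsmul := nsmulRec
  zsmul := zsmulRec

@[simp] theorem add_apply (f g : LinMap R M N) (x : M) : (f + g).1 x = f.1 x + g.1 x := rfl
@[simp] theorem zero_apply (x : M) : (0 : LinMap R M N).1 x = 0 := rfl
@[simp] theorem neg_apply (f : LinMap R M N) (x : M) : (-f).1 x = -(f.1 x) := rfl

end LinMap

/-- The endomorphism ring of a module over a non-unital ring, with the
"diagrammatic" multiplication `(f * g) x = g (f x)` (i.e. `f * g` means
"first `f`, then `g`", matching homomorphisms written on the right). -/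
instance LinMap.instNonUnitalRing {R : Type u} [NonUnitalRing R] {M : Type v}
    [AddCommGroup M] [LMod R M] : NonUnitalRing (LinMap R M M) :=
  { (inferInstance : AddCommGroup (LinMap R M M)) with
    mul := fun f g => ⟨fun x => g.1 (f.1 x),
      ⟨fun x y => by rw [f.2.map_add, g.2.map_add], fun r x => by rw [f.2.map_smul, g.2.map_smul]⟩⟩
    left_distrib := fun f g h => LinMap.ext (funext fun x => rfl)
    right_distrib := fun f g h => LinMap.ext (funext fun x => h.2.map_add _ _)
    zero_mul := fun f => LinMap.ext (funext fun x => f.2.map_zero)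
    mul_zero := fun f => LinMap.ext (funext fun x => rfl)
    mul_assoc := fun f g h => LinMap.ext (funext fun x => rfl) }

@[simp] theorem LinMap.mul_apply {R : Type u} [NonUnitalRing R] {M : Type v}
    [AddCommGroup M] [LMod R M] (f g : LinMap R M M) (x : M) : (f * g).1 x = g.1 (f.1 x) := rfl

/-- A module `M` over a non-unital ring `R` is unitary if `RM = M`. -/
def IsUnitary (R : Type u) [NonUnitalRing R] (M : Type v) [AddCommGroup M] [LMod R M] : Prop :=
  ∀ m : M, m ∈ AddSubgroup.closure {x : M | ∃ (r : R) (n : M), x = r • n}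

/-- The `R`-submodule (as an additive subgroup) generated by a subset. -/
def lspan (R : Type u) [NonUnitalRing R] {M : Type v} [AddCommGroup M] [LMod R M]
    (X : Set M) : AddSubgroup M :=
  AddSubgroup.closure (X ∪ {m | ∃ (r : R) (x : M), x ∈ X ∧ m = r • x})

/-- A subset `A` of a module is finitely generated (as an `R`-submodule). -/
def IsFGSet (R : Type u) [NonUnitalRing R] {M : Type v} [AddCommGroup M] [LMod R M]
    (A : Set M) : Prop :=
  ∃ s : Finset M, (↑s : Set M) ⊆ A ∧ ∀ a ∈ A, a ∈ lspan R (↑s : Set M)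

/-- A finitely generated module over a non-unital ring. -/
def IsFG (R : Type u) [NonUnitalRing R] (M : Type v) [AddCommGroup M] [LMod R M] : Prop :=
  ∃ s : Finset M, ∀ m : M, m ∈ lspan R (↑s : Set M)

/-- The category of unitary left modules over a ring with local units
(objects: unitary left `R`-modules). -/
structure UMod (R : Type u) [NonUnitalRing R] : Type (max u (v + 1)) where
  carrier : Type v
  [grp : AddCommGroup carrier]
  [mod : LMod R carrier]
  unitary : IsUnitary R carrier

attribute [instance] UMod.grp UMod.mod

instance {R : Type u} [NonUnitalRing R] : CoeSort (UMod.{u, v} R) (Type v) := ⟨UMod.carrier⟩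

instance UMod.instCategory {R : Type u} [NonUnitalRing R] : Category (UMod.{u, v} R) where
  Hom M N := LinMap R M.carrier N.carrier
  id M := ⟨fun x => x, ⟨fun _ _ => rfl, fun _ _ => rfl⟩⟩
  comp f g := ⟨fun x => g.1 (f.1 x),
    ⟨fun x y => by rw [f.2.map_add, g.2.map_add], fun r x => by rw [f.2.map_smul, g.2.map_smul]⟩⟩
  id_comp f := LinMap.ext rfl
  comp_id f := LinMap.ext rfl
  assoc f g h := LinMap.ext rfl

@[simp] theorem UMod.comp_apply {R : Type u} [NonUnitalRing R] {M N K : UMod.{u, v} R}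
    (f : M ⟶ N) (g : N ⟶ K) (x : M.carrier) : (f ≫ g).1 x = g.1 (f.1 x) := rfl

@[simp] theorem UMod.id_apply {R : Type u} [NonUnitalRing R] {M : UMod.{u, v} R}
    (x : M.carrier) : (𝟙 M : M ⟶ M).1 x = x := rfl

instance UMod.instPreadditive {R : Type u} [NonUnitalRing R] :
    Preadditive (UMod.{u, v} R) where
  homGroup M N := inferInstanceAs (AddCommGroup (LinMap R M.carrier N.carrier))
  add_comp M N K f f' g := LinMap.ext (funext fun x => g.2.map_add _ _)
  comp_add M N K f g g' := LinMap.ext (funext fun x => rfl)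

/-- A unitary module `P` is a generator of the category of unitary left `R`-modules. -/
def IsGenerator (R : Type u) [NonUnitalRing R] (P : UMod.{u, v} R) : Prop :=
  ∀ (M B : UMod.{u, v} R) (f g : M ⟶ B), f ≠ g → ∃ h : P ⟶ M, h ≫ f ≠ h ≫ g

/-- A set of unitary modules is a cogenerating set for the category of
unitary left `R`-modules. -/
def IsCogenSet (R : Type u) [NonUnitalRing R] (𝒰 : Set (UMod.{u, v} R)) : Prop :=
  ∀ (B M : UMod.{u, v} R) (f g : B ⟶ M), f ≠ g → ∃ U' ∈ 𝒰, ∃ h : M ⟶ U', f ≫ h ≠ g ≫ h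
/-! ### The largest unitary submodule `C·H` of a module `H`, and induced
module structures on hom-groups -/

section umax

variable (C : Type u) [NonUnitalRing C] (H : Type v) [AddCommGroup H] [LMod C H]

/-- `C·H`, the largest unitary `C`-submodule of the `C`-module `H`. -/
def umax : AddSubgroup H :=
  AddSubgroup.closure {h : H | ∃ (c : C) (h' : H), h = c • h'}

variable {C H}

theorem smul_mem_umax (c : C) (h : H) : c • h ∈ umax C H :=
  AddSubgroup.subset_closure ⟨c, h, rfl⟩

/-- An additive, `C`-equivariant map carries `C·H` into `C·H'`. -/
theorem umax_mapsTo {H' : Type w} [AddCommGroup H'] [LMod C H'] (T : H → H')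
    (hadd : ∀ x y, T (x + y) = T x + T y) (hsmul : ∀ (c : C) (x : H), T (c • x) = c • T x)
    {h : H} (hh : h ∈ umax C H) : T h ∈ umax C H' := by
  have hT : IsLHom C T := ⟨hadd, hsmul⟩
  induction hh using AddSubgroup.closure_induction with
  | mem x hx =>
    obtain ⟨c, h', rfl⟩ := hx
    rw [hsmul]; exact smul_mem_umax c (T h')
  | zero => rw [hT.map_zero]; exact (umax C H').zero_mem
  | add x y hx hy ihx ihy => rw [hadd]; exact (umax C H').add_mem ihx ihy
  | neg x hx ihx => rw [hT.map_neg]; exact (umax C H').neg_mem ihx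

instance umax.instLMod : LMod C ↥(umax C H) where
  smul c h := ⟨c • h.1, smul_mem_umax c h.1⟩
  smul_add' c m n := Subtype.ext (LMod.smul_add' c m.1 n.1)
  add_smul' c c' m := Subtype.ext (LMod.add_smul' c c' m.1)
  mul_smul' c c' m := Subtype.ext (LMod.mul_smul' c c' m.1)

@[simp] theorem umax.smul_coe (c : C) (h : ↥(umax C H)) : (c • h).1 = c • h.1 := rfl

/-- If a second ring `D` acts on `H` commuting with the `C`-action,
then `C·H` is stable under the `D`-action. -/
theorem umax_stable {D : Type w} [NonUnitalRing D] [LMod D H] [SMulCommClass C D H]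
    (d : D) {h : H} (hh : h ∈ umax C H) : d • h ∈ umax C H :=
  umax_mapsTo (fun x => d • x) (fun x y => LMod.smul_add' d x y)
    (fun c x => (smul_comm c d x).symm) hh

instance umax.instLMod₂ {D : Type w} [NonUnitalRing D] [LMod D H] [SMulCommClass C D H] :
    LMod D ↥(umax C H) where
  smul d h := ⟨d • h.1, umax_stable d h.2⟩
  smul_add' d m n := Subtype.ext (LMod.smul_add' d m.1 n.1)
  add_smul' d d' m := Subtype.ext (LMod.add_smul' d d' m.1)
  mul_smul' d d' m := Subtype.ext (LMod.mul_smul' d d' m.1)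

instance umax.instSMulCommClass {D : Type w} [NonUnitalRing D] [LMod D H]
    [SMulCommClass C D H] : SMulCommClass C D ↥(umax C H) :=
  ⟨fun c d h => Subtype.ext (smul_comm c d h.1)⟩

/-- If `C` has local units, then `C·H` is a unitary `C`-module. -/
theorem umax_unitary [HasLocalUnits C] : IsUnitary C ↥(umax C H) := by
  intro m
  obtain ⟨h, hh⟩ := m
  induction hh using AddSubgroup.closure_induction with
  | mem x hx =>
    obtain ⟨c, h', rfl⟩ := hx
    obtain ⟨e, he, hec⟩ := HasLocalUnits.exists_unit {c}
    have hc := (hec c (Finset.mem_singleton_self c)).1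
    refine AddSubgroup.subset_closure ⟨e, ⟨c • h', smul_mem_umax c h'⟩, ?_⟩
    refine Subtype.ext ?_
    show c • h' = e • (c • h')
    rw [← LMod.mul_smul', hc]
  | zero =>
    have : (⟨(0 : H), (umax C H).zero_mem⟩ : ↥(umax C H)) = 0 := rfl
    rw [this]; exact AddSubgroup.zero_mem _
  | add x y hx hy ihx ihy =>
    have : (⟨x + y, (umax C H).add_mem hx hy⟩ : ↥(umax C H)) =
        ⟨x, hx⟩ + ⟨y, hy⟩ := rfl
    rw [this]; exact AddSubgroup.add_mem _ ihx ihy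
  | neg x hx ihx =>
    have : (⟨-x, (umax C H).neg_mem hx⟩ : ↥(umax C H)) = -⟨x, hx⟩ := rfl
    rw [this]; exact AddSubgroup.neg_mem _ ihx

end umax

section regular

variable (R : Type u) [NonUnitalRing R]

/-- The left regular module structure of a non-unital ring on itself. -/
instance NonUnitalRing.instLModSelf : LMod R R where
  smul := (· * ·)
  smul_add' := mul_add
  add_smul' := add_mul
  mul_smul' := mul_assoc

@[simp] theorem NonUnitalRing.smul_def (r s : R) : r • s = r * s := rfl

/-- The right regular module structure, as a left module over the opposite ring. -/
instance NonUnitalRing.instLModSelfOp : LMod Rᵐᵒᵖ R where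
  smul r s := s * r.unop
  smul_add' r m n := add_mul m n r.unop
  add_smul' r r' m := mul_add m r.unop r'.unop
  mul_smul' r r' m := (mul_assoc m r'.unop r.unop).symm

@[simp] theorem NonUnitalRing.op_smul_def (r : Rᵐᵒᵖ) (s : R) : r • s = s * r.unop := rfl

instance : SMulCommClass R Rᵐᵒᵖ R :=
  ⟨fun r s x => by
    show r * (x * s.unop) = (r * x) * s.unop
    rw [mul_assoc]⟩

/-- Local units pass to the opposite ring. -/
instance instHasLocalUnitsOp [HasLocalUnits R] : HasLocalUnits Rᵐᵒᵖ where
  exists_unit s := by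
    classical
    obtain ⟨e, he, h⟩ := HasLocalUnits.exists_unit (R := R) (s.image MulOpposite.unop)
    refine ⟨MulOpposite.op e, by rw [← MulOpposite.op_mul, he], fun x hx => ?_⟩
    have hx' := h x.unop (Finset.mem_image_of_mem MulOpposite.unop hx)
    constructor
    · conv_lhs => rw [← MulOpposite.op_unop x, ← MulOpposite.op_mul, hx'.2, MulOpposite.op_unop]
    · conv_lhs => rw [← MulOpposite.op_unop x, ← MulOpposite.op_mul, hx'.1, MulOpposite.op_unop]

end regular

section homact

variable {A B C : Type u} [NonUnitalRing A] [NonUnitalRing B] [NonUnitalRing C]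
variable {X : Type v} {Y : Type w} [AddCommGroup X] [AddCommGroup Y] [LMod B X] [LMod B Y]

/-- The action of `A` on `Hom_B(X, Y)` by precomposition with the right
`A`-action on `X` (homomorphisms written on the right: `(a • f) x = f (x·a)`). -/
instance LinMap.instLModPre [LMod Aᵐᵒᵖ X] [SMulCommClass B Aᵐᵒᵖ X] :
    LMod A (LinMap B X Y) where
  smul a f := ⟨fun x => f.1 (op a • x),
    ⟨fun x y => by rw [LMod.smul_add', f.2.map_add],
     fun r x => by rw [← smul_comm r (op a) x, f.2.map_smul]⟩⟩
  smul_add' a f g := LinMap.ext rfl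
  add_smul' a a' f := LinMap.ext (funext fun x => by
    show f.1 (op (a + a') • x) = f.1 (op a • x) + f.1 (op a' • x)
    rw [← f.2.map_add, ← LMod.add_smul']
    rfl)
  mul_smul' a a' f := LinMap.ext (funext fun x => by
    show f.1 (op (a * a') • x) = f.1 (op a' • (op a • x))
    rw [← LMod.mul_smul']
    rfl)

theorem LinMap.pre_smul_apply [LMod Aᵐᵒᵖ X] [SMulCommClass B Aᵐᵒᵖ X]
    (a : A) (f : LinMap B X Y) (x : X) : (a • f).1 x = f.1 (op a • x) := rfl

/-- The action of `C` on `Hom_B(X, Y)` by postcomposition with a commuting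
`C`-action on `Y`. -/
instance LinMap.instLModPost [LMod C Y] [SMulCommClass B C Y] :
    LMod C (LinMap B X Y) where
  smul c f := ⟨fun x => c • f.1 x,
    ⟨fun x y => by rw [f.2.map_add, LMod.smul_add'],
     fun r x => by rw [f.2.map_smul]; exact (smul_comm r c (f.1 x)).symm⟩⟩
  smul_add' c f g := LinMap.ext (funext fun x => LMod.smul_add' c (f.1 x) (g.1 x))
  add_smul' c c' f := LinMap.ext (funext fun x => LMod.add_smul' c c' (f.1 x))
  mul_smul' c c' f := LinMap.ext (funext fun x => LMod.mul_smul' c c' (f.1 x))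

theorem LinMap.post_smul_apply [LMod C Y] [SMulCommClass B C Y]
    (c : C) (f : LinMap B X Y) (x : X) : (c • f).1 x = c • (f.1 x) := rfl

/-- Pre- and postcomposition actions on hom-groups commute. -/
instance LinMap.instSMulCommClassPrePost [LMod Aᵐᵒᵖ X] [SMulCommClass B Aᵐᵒᵖ X]
    [LMod C Y] [SMulCommClass B C Y] : SMulCommClass A C (LinMap B X Y) :=
  ⟨fun a c f => LinMap.ext rfl⟩

end homact
/-! ### Split direct systems and direct limits of unitary modules -/

section dirsys

variable (R : Type u) [NonUnitalRing R]

/-- A split direct system of unitary left `R`-modules, indexed by a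
quasi-ordered set `(ι, rel)`: a direct system `(P_i, φ_{ij})` together with
splittings `ψ_{ji} : P_j → P_i` (for `i ≤ j`) such that `φ_{ij} ψ_{ji} = id`
and `ψ_{kj} ψ_{ji} = ψ_{ki}`. -/
structure SplitSystem (ι : Type w) (rel : ι → ι → Prop) : Type (max u w (v + 1)) where
  obj : ι → UMod.{u, v} R
  map : ∀ {i j : ι}, rel i j → (obj i ⟶ obj j)
  split : ∀ {i j : ι}, rel i j → (obj j ⟶ obj i)
  map_self : ∀ {i : ι} (h : rel i i) (x : (obj i).carrier), (map h).1 x = x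
  map_map : ∀ {i j k : ι} (hij : rel i j) (hjk : rel j k) (hik : rel i k)
    (x : (obj i).carrier), (map hjk).1 ((map hij).1 x) = (map hik).1 x
  split_map : ∀ {i j : ι} (h : rel i j) (x : (obj i).carrier),
    (split h).1 ((map h).1 x) = x
  split_split : ∀ {i j k : ι} (hij : rel i j) (hjk : rel j k) (hik : rel i k)
    (x : (obj k).carrier), (split hij).1 ((split hjk).1 x) = (split hik).1 x

/-- `P`, together with homomorphisms `φ_i : P_i → P`, is a direct limit of the
direct system `(P_i, φ_{ij})` (with directed index set): the `φ_i` are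
compatible, every element of `P` comes from some `P_i`, and everything killed
by `φ_i` is eventually killed in the system. -/
structure LimitCocone {ι : Type w} {rel : ι → ι → Prop} (D : SplitSystem.{u, v} R ι rel)
    (P : Type v) [AddCommGroup P] [LMod R P] : Type (max u w v) where
  incl : ∀ i, LinMap R (D.obj i).carrier P
  compat : ∀ {i j : ι} (h : rel i j) (x : (D.obj i).carrier),
    (incl j).1 ((D.map h).1 x) = (incl i).1 x
  exhaustive : ∀ x : P, ∃ (i : ι) (y : (D.obj i).carrier), (incl i).1 y = x
  eventually_zero : ∀ i (y : (D.obj i).carrier), (incl i).1 y = 0 →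
    ∃ j, ∃ h : rel i j, (D.map h).1 y = 0

/-- A unitary left `R`-module is locally projective if it is a direct limit of a
split direct system of finitely generated projective unitary left `R`-modules. -/
def IsLocallyProjective (P : Type v) [AddCommGroup P] [LMod R P] : Prop :=
  ∃ (ι : Type v) (rel : ι → ι → Prop),
    (∀ i, rel i i) ∧ (∀ {i j k}, rel i j → rel j k → rel i k) ∧
    Nonempty ι ∧ (∀ i j, ∃ k, rel i k ∧ rel j k) ∧
    ∃ (D : SplitSystem.{u, v} R ι rel) (_ : LimitCocone R D P),
      ∀ i, IsFG R (D.obj i).carrier ∧ CategoryTheory.Projective (D.obj i)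

variable {R}

/-- The transition maps `Ω_{ij} : End_R(P_i) → End_R(P_j)`, `α ↦ ψ_{ji} α φ_{ij}`,
of the direct system of endomorphism rings associated to a split direct system. -/
def SplitSystem.endTrans {ι : Type w} {rel : ι → ι → Prop}
    (D : SplitSystem.{u, v} R ι rel) {i j : ι} (h : rel i j)
    (a : LinMap R (D.obj i).carrier (D.obj i).carrier) :
    LinMap R (D.obj j).carrier (D.obj j).carrier :=
  ⟨fun x => (D.map h).1 (a.1 ((D.split h).1 x)),
   ⟨fun x y => by rw [(D.split h).2.map_add, a.2.map_add, (D.map h).2.map_add],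
    fun r x => by rw [(D.split h).2.map_smul, a.2.map_smul, (D.map h).2.map_smul]⟩⟩

end dirsys
/-! ### The functor `SHom_R(P,−)` and related constructions for a bimodule `P` -/

section shom

variable (R S : Type u) [NonUnitalRing R] [NonUnitalRing S]
variable (P : Type u) [AddCommGroup P] [LMod R P] [LMod Sᵐᵒᵖ P] [SMulCommClass R Sᵐᵒᵖ P]

/-- `SHom_R(P,M) = S·Hom_R(P,M)`, the largest unitary left `S`-submodule of
`Hom_R(P,M)`, as a type. -/
abbrev SHom (M : Type u) [AddCommGroup M] [LMod R M] : Type u :=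
  ↥(umax S (LinMap R P M))

variable {R S P}

/-- The action of `SHom_R(P,−)` on a homomorphism `g : M → N` (postcomposition). -/
def sHomMap {M N : Type u} [AddCommGroup M] [AddCommGroup N] [LMod R M] [LMod R N]
    (g : LinMap R M N) (α : SHom R S P M) : SHom R S P N :=
  ⟨⟨fun x => g.1 (α.1.1 x),
    ⟨fun x y => by rw [α.1.2.map_add, g.2.map_add],
     fun r x => by rw [α.1.2.map_smul, g.2.map_smul]⟩⟩,
   umax_mapsTo (C := S)
     (fun f => ⟨fun x => g.1 (f.1 x),
       ⟨fun x y => by rw [f.2.map_add, g.2.map_add],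
        fun r x => by rw [f.2.map_smul, g.2.map_smul]⟩⟩)
     (fun f f' => LinMap.ext (funext fun x => g.2.map_add _ _))
     (fun s f => LinMap.ext rfl) α.2⟩

theorem sHomMap_apply {M N : Type u} [AddCommGroup M] [AddCommGroup N] [LMod R M]
    [LMod R N] (g : LinMap R M N) (α : SHom R S P M) (x : P) :
    ((sHomMap g α).1).1 x = g.1 (α.1.1 x) := rfl

theorem sHomMap_add {M N : Type u} [AddCommGroup M] [AddCommGroup N] [LMod R M]
    [LMod R N] (g : LinMap R M N) (α β : SHom R S P M) :
    sHomMap g (α + β) = sHomMap g α + sHomMap g β :=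
  Subtype.ext (LinMap.ext (funext fun x =>
    show g.1 (α.1.1 x + β.1.1 x) = g.1 (α.1.1 x) + g.1 (β.1.1 x) from g.2.map_add _ _))

theorem sHomMap_smul {M N : Type u} [AddCommGroup M] [AddCommGroup N] [LMod R M]
    [LMod R N] (g : LinMap R M N) (s : S) (α : SHom R S P M) :
    sHomMap g (s • α) = s • sHomMap g α :=
  Subtype.ext (LinMap.ext (funext fun x => rfl))

/-- `SHom_R(P,g)` as a homomorphism of `S`-modules. -/
def sHomLin {M N : Type u} [AddCommGroup M] [AddCommGroup N] [LMod R M] [LMod R N]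
    (g : LinMap R M N) : LinMap S (SHom R S P M) (SHom R S P N) :=
  ⟨sHomMap g, ⟨sHomMap_add g, fun s α => sHomMap_smul g s α⟩⟩

variable (R S P)

/-- The functor `SHom_R(P,−)` from unitary left `R`-modules to unitary left
`S`-modules. -/
def sHomF [HasLocalUnits S] : UMod.{u, u} R ⥤ UMod.{u, u} S where
  obj M := ⟨SHom R S P M.carrier, umax_unitary⟩
  map g := sHomLin g
  map_id M := LinMap.ext (funext fun α => Subtype.ext (LinMap.ext (funext fun x => rfl)))
  map_comp f g := LinMap.ext (funext fun α => Subtype.ext (LinMap.ext (funext fun x => rfl)))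

/-- `G_P = SHom_R(P,R)`, an `S`-`R`-bimodule. -/
abbrev GP : Type u := ↥(umax S (LinMap R P R))

/-- `RHom_S(G_P, N) = R·Hom_S(G_P, N)`, as a type. -/
abbrev RHomG (N : Type u) [AddCommGroup N] [LMod S N] : Type u :=
  ↥(umax R (LinMap S (GP R S P) N))

variable {R S P}

/-- The action of `RHom_S(G_P,−)` on a homomorphism of `S`-modules. -/
def rHomGMap {N N' : Type u} [AddCommGroup N] [AddCommGroup N'] [LMod S N] [LMod S N']
    (g : LinMap S N N') (α : RHomG R S P N) : RHomG R S P N' :=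
  ⟨⟨fun β => g.1 (α.1.1 β),
    ⟨fun x y => by rw [α.1.2.map_add, g.2.map_add],
     fun s x => by rw [α.1.2.map_smul, g.2.map_smul]⟩⟩,
   umax_mapsTo (C := R)
     (fun f => ⟨fun β => g.1 (f.1 β),
       ⟨fun x y => by rw [f.2.map_add, g.2.map_add],
        fun s x => by rw [f.2.map_smul, g.2.map_smul]⟩⟩)
     (fun f f' => LinMap.ext (funext fun β => g.2.map_add _ _))
     (fun r f => LinMap.ext rfl) α.2⟩

variable (R S P)

/-- The functor `RHom_S(G_P,−)` from unitary left `S`-modules to unitary left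
`R`-modules. -/
def rHomGF [HasLocalUnits R] : UMod.{u, u} S ⥤ UMod.{u, u} R where
  obj N := ⟨RHomG R S P N.carrier, umax_unitary⟩
  map g := ⟨rHomGMap g,
    ⟨fun α β => Subtype.ext (LinMap.ext (funext fun x =>
       show g.1 (α.1.1 x + β.1.1 x) = g.1 (α.1.1 x) + g.1 (β.1.1 x) from g.2.map_add _ _)),
     fun r α => Subtype.ext (LinMap.ext (funext fun x => rfl))⟩⟩
  map_id N := LinMap.ext (funext fun α => Subtype.ext (LinMap.ext (funext fun x => rfl)))
  map_comp f g := LinMap.ext (funext fun α => Subtype.ext (LinMap.ext (funext fun x => rfl)))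

variable {R S P}

/-- The inner component of the evaluation map `γ`: for `n ∈ N` and
`β ∈ Hom_R(P,R)`, the homomorphism `P → N`, `x ↦ (x)β·n`. -/
def gammaInner {N : Type u} [AddCommGroup N] [LMod R N] (n : N) (β : LinMap R P R) :
    LinMap R P N :=
  ⟨fun x => (β.1 x) • n,
   ⟨fun x y => by rw [β.2.map_add, LMod.add_smul'],
    fun r x => by rw [β.2.map_smul, NonUnitalRing.smul_def, LMod.mul_smul']⟩⟩

theorem gammaInner_mem {N : Type u} [AddCommGroup N] [LMod R N] (n : N)
    {β : LinMap R P R} (hβ : β ∈ umax S (LinMap R P R)) :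
    gammaInner n β ∈ umax S (LinMap R P N) :=
  umax_mapsTo (C := S) (fun β => gammaInner n β)
    (fun β β' => LinMap.ext (funext fun x => LMod.add_smul' _ _ _))
    (fun s β => LinMap.ext rfl) hβ

variable (R S P)

/-- The evaluation map `γ_N : N → RHom_S(G_P, SHom_R(P,N))` (before checking that
its values lie in the unitary part `R·Hom_S(G_P, SHom_R(P,N))`):
`n ↦ (β ↦ (x ↦ (x)β·n))`. -/
def gammaFun (N : Type u) [AddCommGroup N] [LMod R N] (n : N) :
    LinMap S (GP R S P) (SHom R S P N) :=
  ⟨fun β => ⟨gammaInner n β.1, gammaInner_mem n β.2⟩,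
   ⟨fun β β' => Subtype.ext (LinMap.ext (funext fun x => LMod.add_smul' _ _ _)),
    fun s β => Subtype.ext (LinMap.ext rfl)⟩⟩

/-- The `s`-trace `sTr(P,M) = Σ_{g ∈ SHom_R(P,M)} Im g` of `P` in `M`. -/
def sTrSub (M : Type u) [AddCommGroup M] [LMod R M] : AddSubgroup M :=
  AddSubgroup.closure {m : M | ∃ f : LinMap R P M, f ∈ umax S (LinMap R P M) ∧ ∃ x : P, m = f.1 x}

/-- `st_P(M) = 0`: the only `R`-submodule `K ⊆ M` with `SHom_R(P,K) = 0` is the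
zero submodule (equivalently, the sum of all such submodules is zero). -/
def stPZero (M : Type u) [AddCommGroup M] [LMod R M] : Prop :=
  ∀ K : AddSubgroup M, (∀ (r : R) (x : M), x ∈ K → r • x ∈ K) →
    (∀ (s : S) (f : LinMap R P M), (∀ x : P, f.1 x ∈ K) → s • f = 0) →
    ∀ m ∈ K, m = 0

/-- `SHom_R(P,X) = 0`. -/
def sHomZero (X : Type u) [AddCommGroup X] [LMod R X] : Prop :=
  ∀ f : LinMap R P X, f ∈ umax S (LinMap R P X) → f = 0

end shom
/-! ### Bimodules, dual hom functors, reflexivity, Morita duality bimodules,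
finiteness conditions -/

section bimod

variable (R S : Type u) [NonUnitalRing R] [NonUnitalRing S]

/-- A bundled `R`-`S`-bimodule over non-unital rings. -/
structure BimodLU : Type (u + 1) where
  carrier : Type u
  [grp : AddCommGroup carrier]
  [lmod : LMod R carrier]
  [rmod : LMod Sᵐᵒᵖ carrier]
  [comm : SMulCommClass R Sᵐᵒᵖ carrier]
  [comm' : SMulCommClass Sᵐᵒᵖ R carrier]

attribute [instance] BimodLU.grp BimodLU.lmod BimodLU.rmod BimodLU.comm BimodLU.comm'

variable (U : Type u) [AddCommGroup U] [LMod R U] [LMod Sᵐᵒᵖ U] [SMulCommClass R Sᵐᵒᵖ U]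
  [SMulCommClass Sᵐᵒᵖ R U]

/-- The canonical map `μ : S → End_R(U)`, `s ↦ (x ↦ x·s)`. -/
def muMap (s : S) : LinMap R U U :=
  ⟨fun x => op s • x,
   ⟨fun x y => LMod.smul_add' (op s) x y, fun r x => (smul_comm r (op s) x).symm⟩⟩

/-- The canonical map `λ : R → End_S(U)`, `r ↦ (x ↦ r·x)`. -/
def lambdaMap (r : R) : LinMap Sᵐᵒᵖ U U :=
  ⟨fun x => r • x,
   ⟨fun x y => LMod.smul_add' r x y, fun s x => smul_comm r s x⟩⟩

/-- `Hom_R(M,U)S`, the largest unitary right `S`-submodule of `Hom_R(M,U)`,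
as a type (a right `S`-module, i.e. a left `Sᵐᵒᵖ`-module). -/
abbrev DHomL (M : Type u) [AddCommGroup M] [LMod R M] : Type u :=
  ↥(umax Sᵐᵒᵖ (LinMap R M U))

/-- `RHom_S(N,U)`, the largest unitary left `R`-submodule of `Hom_S(N,U)`
for a right `S`-module `N`, as a type. -/
abbrev DHomR (N : Type u) [AddCommGroup N] [LMod Sᵐᵒᵖ N] : Type u :=
  ↥(umax R (LinMap Sᵐᵒᵖ N U))

variable {R S U}

/-- Action of the contravariant functor `Hom_R(−,U)S` on morphisms
(precomposition). -/
def dHomLMap {M N : Type u} [AddCommGroup M] [AddCommGroup N] [LMod R M] [LMod R N]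
    (f : LinMap R M N) (α : DHomL R S U N) : DHomL R S U M :=
  ⟨⟨fun x => α.1.1 (f.1 x),
    ⟨fun x y => by rw [f.2.map_add, α.1.2.map_add],
     fun r x => by rw [f.2.map_smul, α.1.2.map_smul]⟩⟩,
   umax_mapsTo (C := Sᵐᵒᵖ)
     (fun g => ⟨fun x => g.1 (f.1 x),
       ⟨fun x y => by rw [f.2.map_add, g.2.map_add],
        fun r x => by rw [f.2.map_smul, g.2.map_smul]⟩⟩)
     (fun g g' => LinMap.ext rfl) (fun s g => LinMap.ext rfl) α.2⟩

/-- Action of the contravariant functor `RHom_S(−,U)` on morphisms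
(precomposition). -/
def dHomRMap {M N : Type u} [AddCommGroup M] [AddCommGroup N] [LMod Sᵐᵒᵖ M]
    [LMod Sᵐᵒᵖ N] (f : LinMap Sᵐᵒᵖ M N) (α : DHomR R S U N) : DHomR R S U M :=
  ⟨⟨fun x => α.1.1 (f.1 x),
    ⟨fun x y => by rw [f.2.map_add, α.1.2.map_add],
     fun s x => by rw [f.2.map_smul, α.1.2.map_smul]⟩⟩,
   umax_mapsTo (C := R)
     (fun g => ⟨fun x => g.1 (f.1 x),
       ⟨fun x y => by rw [f.2.map_add, g.2.map_add],
        fun s x => by rw [f.2.map_smul, g.2.map_smul]⟩⟩)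
     (fun g g' => LinMap.ext rfl) (fun r g => LinMap.ext rfl) α.2⟩

variable (R S U)

/-- The contravariant functor `Hom_R(−,U)S` from unitary left `R`-modules to
unitary right `S`-modules. -/
def dualL [HasLocalUnits S] : (UMod.{u, u} R)ᵒᵖ ⥤ UMod.{u, u} Sᵐᵒᵖ where
  obj M := ⟨DHomL R S U M.unop.carrier, umax_unitary⟩
  map f := ⟨dHomLMap f.unop,
    ⟨fun α β => Subtype.ext (LinMap.ext (funext fun x => rfl)),
     fun s α => Subtype.ext (LinMap.ext (funext fun x => rfl))⟩⟩
  map_id M := LinMap.ext (funext fun α => Subtype.ext (LinMap.ext (funext fun x => rfl)))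
  map_comp f g := LinMap.ext (funext fun α => Subtype.ext (LinMap.ext (funext fun x => rfl)))

/-- The contravariant functor `RHom_S(−,U)` from unitary right `S`-modules to
unitary left `R`-modules. -/
def dualR [HasLocalUnits R] : (UMod.{u, u} Sᵐᵒᵖ)ᵒᵖ ⥤ UMod.{u, u} R where
  obj N := ⟨DHomR R S U N.unop.carrier, umax_unitary⟩
  map f := ⟨dHomRMap f.unop,
    ⟨fun α β => Subtype.ext (LinMap.ext (funext fun x => rfl)),
     fun r α => Subtype.ext (LinMap.ext (funext fun x => rfl))⟩⟩
  map_id N := LinMap.ext (funext fun α => Subtype.ext (LinMap.ext (funext fun x => rfl)))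
  map_comp f g := LinMap.ext (funext fun α => Subtype.ext (LinMap.ext (funext fun x => rfl)))

/-- The underlying function of the evaluation map
`φ_X : X → RHom_S(Hom_R(X,U)S, U)`, `(x)φ_X : β ↦ (x)β`. -/
def evalFunL (X : Type u) [AddCommGroup X] [LMod R X] (x : X) :
    LinMap Sᵐᵒᵖ (DHomL R S U X) U :=
  ⟨fun β => β.1.1 x, ⟨fun β β' => rfl, fun s β => rfl⟩⟩

/-- A unitary left `R`-module `X` is `U`-reflexive: the evaluation map
`φ_X : X → RHom_S(Hom_R(X,U)S, U)` is an isomorphism. -/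
def IsLReflexive (X : Type u) [AddCommGroup X] [LMod R X] : Prop :=
  ∃ h : ∀ x : X, evalFunL R S U X x ∈ umax R (LinMap Sᵐᵒᵖ (DHomL R S U X) U),
    Function.Bijective (fun x : X => (⟨evalFunL R S U X x, h x⟩ : DHomR R S U (DHomL R S U X)))

/-- The underlying function of the evaluation map
`ψ_Y : Y → Hom_R(RHom_S(Y,U),U)S`, `ψ_Y(y) : α ↦ α(y)`. -/
def evalFunR (Y : Type u) [AddCommGroup Y] [LMod Sᵐᵒᵖ Y] (y : Y) :
    LinMap R (DHomR R S U Y) U :=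
  ⟨fun α => α.1.1 y, ⟨fun α α' => rfl, fun r α => rfl⟩⟩

/-- A unitary right `S`-module `Y` is `U`-reflexive: the evaluation map
`ψ_Y : Y → Hom_R(RHom_S(Y,U),U)S` is an isomorphism. -/
def IsRReflexive (Y : Type u) [AddCommGroup Y] [LMod Sᵐᵒᵖ Y] : Prop :=
  ∃ h : ∀ y : Y, evalFunR R S U Y y ∈ umax Sᵐᵒᵖ (LinMap R (DHomR R S U Y) U),
    Function.Bijective (fun y : Y => (⟨evalFunR R S U Y y, h y⟩ : DHomL R S U (DHomR R S U Y)))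

/-- Properties (I) and (II) of a Morita duality bimodule: `U` is the direct
limit of a split direct system of finitely generated injective unitary left
`R`-modules whose members form a cogenerating set for the category of unitary
left `R`-modules, and `μ : S → End_R(U)` is a monomorphism whose image is
exactly the set of endomorphisms factoring through one of the induced
projections. -/
def SatisfiesI_II : Prop :=
  ∃ (ι : Type u) (rel : ι → ι → Prop),
    (∀ i, rel i i) ∧ (∀ {i j k}, rel i j → rel j k → rel i k) ∧
    Nonempty ι ∧ (∀ i j, ∃ k, rel i k ∧ rel j k) ∧
    ∃ (D : SplitSystem.{u, u} R ι rel) (c : LimitCocone R D U)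
      (proj : ∀ i, LinMap R U (D.obj i).carrier),
      (∀ i, IsFG R (D.obj i).carrier ∧ CategoryTheory.Injective (D.obj i)) ∧
      IsCogenSet R {M | ∃ i, M = D.obj i} ∧
      (∀ i (x : (D.obj i).carrier), (proj i).1 ((c.incl i).1 x) = x) ∧
      (∀ {i j} (h : rel i j) (x : U), (D.split h).1 ((proj j).1 x) = (proj i).1 x) ∧
      Function.Injective (muMap R S U) ∧
      Set.range (muMap R S U) =
        {g : LinMap R U U | ∃ (i : ι) (γ : LinMap R (D.obj i).carrier U),
          g.1 = fun x => γ.1 ((proj i).1 x)}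

/-- Properties (III) and (IV) of a Morita duality bimodule (the right-module
side, dual to (I) and (II)). -/
def SatisfiesIII_IV : Prop :=
  ∃ (ι : Type u) (rel : ι → ι → Prop),
    (∀ i, rel i i) ∧ (∀ {i j k}, rel i j → rel j k → rel i k) ∧
    Nonempty ι ∧ (∀ i j, ∃ k, rel i k ∧ rel j k) ∧
    ∃ (D : SplitSystem.{u, u} Sᵐᵒᵖ ι rel) (c : LimitCocone Sᵐᵒᵖ D U)
      (proj : ∀ i, LinMap Sᵐᵒᵖ U (D.obj i).carrier),
      (∀ i, IsFG Sᵐᵒᵖ (D.obj i).carrier ∧ CategoryTheory.Injective (D.obj i)) ∧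
      IsCogenSet Sᵐᵒᵖ {M | ∃ i, M = D.obj i} ∧
      (∀ i (x : (D.obj i).carrier), (proj i).1 ((c.incl i).1 x) = x) ∧
      (∀ {i j} (h : rel i j) (x : U), (D.split h).1 ((proj j).1 x) = (proj i).1 x) ∧
      Function.Injective (lambdaMap R S U) ∧
      Set.range (lambdaMap R S U) =
        {g : LinMap Sᵐᵒᵖ U U | ∃ (i : ι) (γ : LinMap Sᵐᵒᵖ (D.obj i).carrier U),
          g.1 = fun x => γ.1 ((proj i).1 x)}

/-- A Morita duality `R`-`S`-bimodule. -/
def IsMoritaDualityBimod : Prop :=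
  IsUnitary R U ∧ IsUnitary Sᵐᵒᵖ U ∧ SatisfiesI_II R S U ∧ SatisfiesIII_IV R S U

end bimod

section cats

variable (R : Type u) [NonUnitalRing R]

/-- The category of finitely generated unitary left `R`-modules. -/
abbrev FGMod := CategoryTheory.ObjectProperty.FullSubcategory (fun M : UMod.{u, u} R => IsFG R M.carrier)

/-- The category of finitely generated injective unitary left `R`-modules. -/
abbrev InjFGMod := CategoryTheory.ObjectProperty.FullSubcategory
  (fun M : UMod.{u, u} R => IsFG R M.carrier ∧ CategoryTheory.Injective M)

/-- The category of finitely generated projective unitary left `R`-modules. -/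
abbrev ProjFGMod := CategoryTheory.ObjectProperty.FullSubcategory
  (fun M : UMod.{u, u} R => IsFG R M.carrier ∧ CategoryTheory.Projective M)

/-- There is a duality (an additive contravariant equivalence) between the
categories of finitely generated unitary left `R`-modules and finitely
generated unitary right `S`-modules. -/
def ExistsFGDuality (R S : Type u) [NonUnitalRing R] [NonUnitalRing S] : Prop :=
  ∃ F : (FGMod R)ᵒᵖ ⥤ FGMod Sᵐᵒᵖ, F.Additive ∧ F.IsEquivalence

/-- Bundled ring with local units. -/
structure RingLU : Type (u + 1) where
  carrier : Type u
  [ring : NonUnitalRing carrier]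
  [lu : HasLocalUnits carrier]

attribute [instance] RingLU.ring RingLU.lu

/-- A ring with local units is left Morita if there is a ring `R'` with local
units and a duality from finitely generated unitary left `R`-modules to
finitely generated unitary right `R'`-modules. -/
def IsLeftMorita : Prop :=
  ∃ R' : RingLU.{u}, ExistsFGDuality R R'.carrier

/-- `R` is left locally finite: every finitely generated unitary left
`R`-module has finite length (equivalently, the lengths of chains of
submodules of such a module are bounded). -/
def IsLeftLocallyFinite : Prop :=
  ∀ (M : Type u) [AddCommGroup M] [LMod R M], IsUnitary R M → IsFG R M →
    ∃ n : ℕ, ∀ c : Fin (n + 1) → AddSubgroup M,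
      (∀ i (r : R) x, x ∈ c i → r • x ∈ c i) →
      ¬(∀ i : Fin n, c i.castSucc < c i.succ)

/-- `R` is left locally noetherian: every finitely generated unitary left
`R`-module is noetherian. -/
def IsLeftLocallyNoetherian : Prop :=
  ∀ (M : Type u) [AddCommGroup M] [LMod R M], IsUnitary R M → IsFG R M →
    ∀ c : ℕ → AddSubgroup M, (∀ i (r : R) x, x ∈ c i → r • x ∈ c i) →
      (∀ i, c i ≤ c (i + 1)) → ∃ n, ∀ m, n ≤ m → c m = c n

end cats

section principal

variable (R : Type u) [NonUnitalRing R]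

/-- The principal left ideal `Re` of a non-unital ring, for an element `e`. -/
def principalLeft (e : R) : AddSubgroup R where
  carrier := {y : R | ∃ r : R, y = r * e}
  add_mem' := by
    rintro a b ⟨r, hr⟩ ⟨s, hs⟩
    exact ⟨r + s, by rw [hr, hs, add_mul]⟩
  zero_mem' := ⟨0, by rw [zero_mul]⟩
  neg_mem' := by
    rintro a ⟨r, hr⟩
    exact ⟨-r, by rw [hr, neg_mul]⟩

instance (e : R) : LMod R ↥(principalLeft R e) where
  smul r y := ⟨r * y.1, by obtain ⟨s, hs⟩ := y.2; exact ⟨r * s, by rw [hs, mul_assoc]⟩⟩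
  smul_add' r m n := Subtype.ext (mul_add r m.1 n.1)
  add_smul' r s m := Subtype.ext (add_mul r s m.1)
  mul_smul' r s m := Subtype.ext (mul_assoc r s m.1)

/-- The principal right ideal `fS` of a non-unital ring, as a right module
(left module over the opposite ring). -/
def principalRight (f : R) : AddSubgroup R where
  carrier := {y : R | ∃ s : R, y = f * s}
  add_mem' := by
    rintro a b ⟨r, hr⟩ ⟨s, hs⟩
    exact ⟨r + s, by rw [hr, hs, mul_add]⟩
  zero_mem' := ⟨0, by rw [mul_zero]⟩
  neg_mem' := by
    rintro a ⟨r, hr⟩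
    exact ⟨-r, by rw [hr, mul_neg]⟩

instance (f : R) : LMod Rᵐᵒᵖ ↥(principalRight R f) where
  smul s y := ⟨y.1 * s.unop, by
    obtain ⟨t, ht⟩ := y.2; exact ⟨t * s.unop, by rw [ht, mul_assoc]⟩⟩
  smul_add' s m n := Subtype.ext (add_mul m.1 n.1 s.unop)
  add_smul' s t m := Subtype.ext (mul_add m.1 s.unop t.unop)
  mul_smul' s t m := Subtype.ext (mul_assoc m.1 t.unop s.unop).symm

end principal

section restr

variable (R S : Type u) [NonUnitalRing R] [NonUnitalRing S] [HasLocalUnits R] [HasLocalUnits S]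
variable (U : Type u) [AddCommGroup U] [LMod R U] [LMod Sᵐᵒᵖ U] [SMulCommClass R Sᵐᵒᵖ U]
  [SMulCommClass Sᵐᵒᵖ R U]

/-- The restriction of the contravariant functor `Hom_R(−,U)S` to finitely
generated modules, given that it preserves finite generation. -/
def dualLRestr (hFG : ∀ X : UMod.{u, u} R, IsFG R X.carrier →
    IsFG Sᵐᵒᵖ ((dualL R S U).obj (Opposite.op X)).carrier) :
    (FGMod R)ᵒᵖ ⥤ FGMod Sᵐᵒᵖ :=
  CategoryTheory.ObjectProperty.lift _
    ((CategoryTheory.ObjectProperty.ι _).op ⋙ dualL R S U)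
    (fun X => hFG X.unop.obj X.unop.property)

/-- The restriction of the contravariant functor `RHom_S(−,U)` to finitely
generated modules, given that it preserves finite generation. -/
def dualRRestr (hFG : ∀ Y : UMod.{u, u} Sᵐᵒᵖ, IsFG Sᵐᵒᵖ Y.carrier →
    IsFG R ((dualR R S U).obj (Opposite.op Y)).carrier) :
    (FGMod Sᵐᵒᵖ)ᵒᵖ ⥤ FGMod R :=
  CategoryTheory.ObjectProperty.lift _
    ((CategoryTheory.ObjectProperty.ι _).op ⋙ dualR R S U)
    (fun Y => hFG Y.unop.obj Y.unop.property)

end restr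
/-! ### Direct sums of modules over non-unital rings -/

section dfinsupp

variable {R : Type u} [NonUnitalRing R] {ι : Type v} {β : ι → Type w}
  [∀ i, AddCommGroup (β i)] [∀ i, LMod R (β i)]

/-- Pointwise scalar action on a direct sum. -/
def dfinsuppSMul (r : R) (f : Π₀ i, β i) : Π₀ i, β i :=
  f.mapRange (fun _ x => r • x) (fun _ => LMod.smul_zero' r)

theorem dfinsuppSMul_apply (r : R) (f : Π₀ i, β i) (i : ι) :
    dfinsuppSMul r f i = r • f i := DFinsupp.mapRange_apply _ _ f i

instance DFinsupp.instLMod : LMod R (Π₀ i, β i) where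
  smul := dfinsuppSMul
  smul_add' r f g := by
    ext i
    show dfinsuppSMul r (f + g) i = (dfinsuppSMul r f + dfinsuppSMul r g) i
    rw [DFinsupp.add_apply, dfinsuppSMul_apply, dfinsuppSMul_apply, dfinsuppSMul_apply,
      DFinsupp.add_apply]
    exact LMod.smul_add' r (f i) (g i)
  add_smul' r s f := by
    ext i
    show dfinsuppSMul (r + s) f i = (dfinsuppSMul r f + dfinsuppSMul s f) i
    rw [DFinsupp.add_apply, dfinsuppSMul_apply, dfinsuppSMul_apply, dfinsuppSMul_apply]
    exact LMod.add_smul' r s (f i)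
  mul_smul' r s f := by
    ext i
    show dfinsuppSMul (r * s) f i = dfinsuppSMul r (dfinsuppSMul s f) i
    rw [dfinsuppSMul_apply, dfinsuppSMul_apply, dfinsuppSMul_apply]
    exact LMod.mul_smul' r s (f i)

@[simp] theorem DFinsupp.lmod_smul_apply (r : R) (f : Π₀ i, β i) (i : ι) :
    (r • f) i = r • f i := dfinsuppSMul_apply r f i

end dfinsupp
/-! ### Miscellaneous helpers: submodule stability, `Pf`, traces, sums -/

section extra

variable {R : Type u} [NonUnitalRing R] {M : Type v} [AddCommGroup M] [LMod R M]

theorem closure_smul_stable {s : Set M}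
    (h : ∀ (r : R) (x : M), x ∈ s → r • x ∈ AddSubgroup.closure s) (r : R) {x : M}
    (hx : x ∈ AddSubgroup.closure s) : r • x ∈ AddSubgroup.closure s := by
  induction hx using AddSubgroup.closure_induction with
  | mem y hy => exact h r y hy
  | zero => rw [LMod.smul_zero']; exact AddSubgroup.zero_mem _
  | add y z hy hz ihy ihz => rw [LMod.smul_add']; exact AddSubgroup.add_mem _ ihy ihz
  | neg y hy ihy => rw [LMod.smul_neg']; exact AddSubgroup.neg_mem _ ihy

end extra

section pe

variable (R S : Type u) [NonUnitalRing R] [NonUnitalRing S]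
variable (P : Type u) [AddCommGroup P] [LMod R P] [LMod Sᵐᵒᵖ P] [SMulCommClass R Sᵐᵒᵖ P]

/-- The submodule `Pf = {x·f | x ∈ P}` of `P`, for `f ∈ S`. -/
def peSub (f : S) : AddSubgroup P where
  carrier := Set.range (fun x : P => (op f : Sᵐᵒᵖ) • x)
  add_mem' := by
    rintro a b ⟨x, rfl⟩ ⟨y, rfl⟩
    exact ⟨x + y, LMod.smul_add' (op f) x y⟩
  zero_mem' := ⟨0, LMod.smul_zero' _⟩
  neg_mem' := by
    rintro a ⟨x, rfl⟩
    exact ⟨-x, LMod.smul_neg' (op f) x⟩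

instance (f : S) : LMod R ↥(peSub S P f) where
  smul r y := ⟨r • y.1, by
    obtain ⟨x, hx⟩ := y.2
    exact ⟨r • x, by rw [← hx, smul_comm]⟩⟩
  smul_add' r m n := Subtype.ext (LMod.smul_add' r m.1 n.1)
  add_smul' r s m := Subtype.ext (LMod.add_smul' r s m.1)
  mul_smul' r s m := Subtype.ext (LMod.mul_smul' r s m.1)

variable {R S P} in
theorem sTrSub_smul_stable {M : Type u} [AddCommGroup M] [LMod R M] (r : R) {m : M}
    (hm : m ∈ sTrSub R S P M) : r • m ∈ sTrSub R S P M := by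
  refine closure_smul_stable (fun r' x hx => ?_) r hm
  obtain ⟨g, hg, y, rfl⟩ := hx
  exact AddSubgroup.subset_closure ⟨g, hg, r' • y, (g.2.map_smul r' y).symm⟩

instance (M : Type u) [AddCommGroup M] [LMod R M] : LMod R ↥(sTrSub R S P M) where
  smul r y := ⟨r • y.1, sTrSub_smul_stable r y.2⟩
  smul_add' r m n := Subtype.ext (LMod.smul_add' r m.1 n.1)
  add_smul' r s m := Subtype.ext (LMod.add_smul' r s m.1)
  mul_smul' r s m := Subtype.ext (LMod.mul_smul' r s m.1)

end pe

section sum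

/-- Summation over a direct sum against a family of additive maps
(the canonical map `⊕_I M_i → N`). -/
noncomputable def dfinsuppSum {ι : Type u} {β : ι → Type v} [∀ i, AddCommGroup (β i)]
    {γ : Type w} [AddCommGroup γ] (f : ∀ i, β i →+ γ) (x : Π₀ i, β i) : γ :=
  letI := Classical.decEq ι
  DFinsupp.sumAddHom f x

end sum


/-! ## Auxiliary material for Statement 8 -/

section auxSums

variable {S : Type u} [NonUnitalRing S]

theorem IsLHom.map_sub {M : Type v} {N : Type w} [AddCommGroup M] [AddCommGroup N]
    [LMod S M] [LMod S N] {f : M → N} (hf : IsLHom S f) (x y : M) :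
    f (x - y) = f x - f y := by
  rw [sub_eq_add_neg, hf.map_add, hf.map_neg, sub_eq_add_neg]

theorem lhom_sum {M : Type v} {N : Type w} [AddCommGroup M] [AddCommGroup N]
    [LMod S M] [LMod S N] {f : M → N} (hf : IsLHom S f) {ι : Type*} (s : Finset ι)
    (g : ι → M) : f (∑ i ∈ s, g i) = ∑ i ∈ s, f (g i) :=
  map_sum (AddMonoidHom.mk' f hf.map_add) g s

theorem lsmul_sum {M : Type v} [AddCommGroup M] [LMod S M] (r : S) {ι : Type*}
    (s : Finset ι) (g : ι → M) : r • (∑ i ∈ s, g i) = ∑ i ∈ s, r • g i :=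
  map_sum (AddMonoidHom.mk' (fun m : M => r • m) (LMod.smul_add' r)) g s

theorem linmap_sum_apply {X : Type v} {Y : Type w}
    [AddCommGroup X] [AddCommGroup Y] [LMod S X] [LMod S Y] {ι : Type*} (s : Finset ι)
    (F : ι → LinMap S X Y) (x : X) : (∑ i ∈ s, F i).1 x = ∑ i ∈ s, (F i).1 x :=
  map_sum (AddMonoidHom.mk' (fun F : LinMap S X Y => F.1 x) (fun _ _ => rfl)) F s

theorem umax_coe_sum {H : Type v} [AddCommGroup H] [LMod S H] {ι : Type*} (s : Finset ι)
    (w : ι → ↥(umax S H)) :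
    ((∑ i ∈ s, w i : ↥(umax S H)) : H) = ∑ i ∈ s, ((w i : H)) :=
  map_sum (umax S H).subtype w s

theorem exists_idem_smul_eq [HasLocalUnits S] {X : Type v} [AddCommGroup X] [LMod S X]
    {α : X} (hα : α ∈ umax S X) : ∃ f : S, f * f = f ∧ f • α = α := by
  induction hα using AddSubgroup.closure_induction with
  | mem x hx =>
    obtain ⟨s, x', rfl⟩ := hx
    obtain ⟨e, he, hu⟩ := HasLocalUnits.exists_unit {s}
    exact ⟨e, he, by rw [← LMod.mul_smul', (hu s (Finset.mem_singleton_self s)).1]⟩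
  | zero =>
    obtain ⟨e, he, -⟩ := HasLocalUnits.exists_unit (∅ : Finset S)
    exact ⟨e, he, LMod.smul_zero' e⟩
  | add x y hx hy ihx ihy =>
    classical
    obtain ⟨f1, hf1, h1⟩ := ihx
    obtain ⟨f2, hf2, h2⟩ := ihy
    obtain ⟨e, he, hu⟩ := HasLocalUnits.exists_unit {f1, f2}
    have e1 : e * f1 = f1 := (hu f1 (by simp)).1
    have e2 : e * f2 = f2 := (hu f2 (by simp)).1
    refine ⟨e, he, ?_⟩
    rw [LMod.smul_add', ← h1, ← h2, ← LMod.mul_smul', ← LMod.mul_smul', e1, e2, h1, h2]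
  | neg x hx ihx =>
    obtain ⟨f, hf, h⟩ := ihx
    exact ⟨f, hf, by rw [LMod.smul_neg', h]⟩

end auxSums

section auxFree

variable {R : Type u} [NonUnitalRing R]

theorem UMod.epi_of_surjective {M N : UMod.{u, v} R}
    (f : M ⟶ N) (hf : Function.Surjective f.1) : Epi f := by
  constructor
  intro Z g h hgh
  refine LinMap.ext (funext fun n => ?_)
  obtain ⟨m, rfl⟩ := hf n
  exact congrFun (congrArg Subtype.val hgh) m

instance piFree.instLMod {ι : Type v} : LMod R (ι → R) where
  smul r v := fun i => r * v i
  smul_add' r v w := funext fun i => mul_add r (v i) (w i)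
  add_smul' r s v := funext fun i => add_mul r s (v i)
  mul_smul' r s v := funext fun i => mul_assoc r s (v i)

theorem piFree_unitary [HasLocalUnits R] {n : ℕ} : IsUnitary R (Fin n → R) := by
  classical
  intro v
  obtain ⟨e, he, hu⟩ := HasLocalUnits.exists_unit (Finset.image v Finset.univ)
  refine AddSubgroup.subset_closure ⟨e, v, funext fun i => ?_⟩
  exact ((hu (v i) (Finset.mem_image_of_mem v (Finset.mem_univ i))).1).symm

/-- The free unitary module on `n` generators. -/
def freeUMod (R : Type u) [NonUnitalRing R] [HasLocalUnits R] (n : ℕ) : UMod.{u, u} R :=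
  ⟨Fin n → R, piFree_unitary⟩

/-- The canonical map from the free module determined by generators. -/
def freeMap [HasLocalUnits R] {n : ℕ} {M : UMod.{u, u} R} (z : Fin n → M.carrier) :
    freeUMod R n ⟶ M :=
  ⟨fun v => ∑ i, v i • z i,
   ⟨fun v w => by
      rw [← Finset.sum_add_distrib]
      exact Finset.sum_congr rfl fun i _ => LMod.add_smul' _ _ _,
    fun r v => by
      rw [lsmul_sum]
      exact Finset.sum_congr rfl fun i _ => LMod.mul_smul' r (v i) (z i)⟩⟩

theorem freeMap_surjective [HasLocalUnits R] {n : ℕ} {M : UMod.{u, u} R}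
    (z : Fin n → M.carrier)
    (hgen : ∀ m : M.carrier, m ∈ AddSubgroup.closure
      {x : M.carrier | ∃ (r : R) (t : Fin n), x = r • z t}) :
    Function.Surjective (freeMap z).1 := by
  intro m
  induction hgen m using AddSubgroup.closure_induction with
  | mem x hx =>
    obtain ⟨r, t, rfl⟩ := hx
    classical
    refine ⟨(Pi.single t r : Fin n → R), ?_⟩
    show (∑ i, (Pi.single t r : Fin n → R) i • z i) = r • z t
    rw [Finset.sum_eq_single t (fun b _ hb => by
      rw [Pi.single_eq_of_ne hb, LMod.zero_smul']) (fun h => absurd (Finset.mem_univ t) h)]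
    rw [Pi.single_eq_same]
  | zero => exact ⟨0, by show (∑ i, (0 : Fin n → R) i • z i) = 0; simp [LMod.zero_smul']⟩
  | add a b _ _ iha ihb =>
    obtain ⟨v, hv⟩ := iha
    obtain ⟨w, hw⟩ := ihb
    exact ⟨v + w, by rw [(freeMap z).2.map_add, hv, hw]⟩
  | neg a _ iha =>
    obtain ⟨v, hv⟩ := iha
    exact ⟨-v, by rw [(freeMap z).2.map_neg, hv]⟩

theorem fg_unitary_gen {M : Type v} [AddCommGroup M] [LMod R M]
    (hu : IsUnitary R M) (hfg : IsFG R M) :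
    ∃ (n : ℕ) (z : Fin n → M), ∀ m : M,
      m ∈ AddSubgroup.closure {x : M | ∃ (r : R) (t : Fin n), x = r • z t} := by
  classical
  obtain ⟨s, hs⟩ := hfg
  refine ⟨s.card, fun i => (s.equivFin.symm i).1, fun m => ?_⟩
  set z : Fin s.card → M := fun i => (s.equivFin.symm i).1 with hzdef
  set T := AddSubgroup.closure {x : M | ∃ (r : R) (t : Fin s.card), x = r • z t} with hT
  have key : ∀ p : M, p ∈ lspan R (↑s : Set M) → ∀ r : R, r • p ∈ T := by
    intro p hp
    induction hp using AddSubgroup.closure_induction with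
    | mem x hx =>
      intro r
      rcases hx with hx | ⟨r', x', hx', rfl⟩
      · refine AddSubgroup.subset_closure ⟨r, s.equivFin ⟨x, hx⟩, ?_⟩
        have : z (s.equivFin ⟨x, hx⟩) = x := by simp [hzdef]
        rw [this]
      · refine AddSubgroup.subset_closure ⟨r * r', s.equivFin ⟨x', hx'⟩, ?_⟩
        have : z (s.equivFin ⟨x', hx'⟩) = x' := by simp [hzdef]
        rw [this, LMod.mul_smul']
    | zero => intro r; rw [LMod.smul_zero']; exact T.zero_mem
    | add a b _ _ iha ihb => intro r; rw [LMod.smul_add']; exact T.add_mem (iha r) (ihb r)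
    | neg a _ iha => intro r; rw [LMod.smul_neg']; exact T.neg_mem (iha r)
  induction hu m using AddSubgroup.closure_induction with
  | mem x hx => obtain ⟨r, p, rfl⟩ := hx; exact key p (hs p) r
  | zero => exact T.zero_mem
  | add a b _ _ iha ihb => exact T.add_mem iha ihb
  | neg a _ iha => exact T.neg_mem iha

theorem exists_dual_basis_of_fg_projective [HasLocalUnits R]
    (M : UMod.{u, u} R) (hfg : IsFG R M.carrier) (hproj : CategoryTheory.Projective M) :
    ∃ (n : ℕ) (z : Fin n → M.carrier) (σ : Fin n → LinMap R M.carrier R),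
      ∀ w : M.carrier, w = ∑ t, (σ t).1 w • z t := by
  obtain ⟨n, z, hgen⟩ := fg_unitary_gen M.unitary hfg
  have hq : Function.Surjective (freeMap z).1 := freeMap_surjective z hgen
  have : Epi (freeMap z) := UMod.epi_of_surjective _ hq
  obtain ⟨σ', hσ'⟩ := hproj.factors (𝟙 M) (freeMap z)
  refine ⟨n, z, fun t => ⟨fun w => σ'.1 w t,
    ⟨fun a b => by rw [σ'.2.map_add]; rfl,
     fun r a => by rw [σ'.2.map_smul]; rfl⟩⟩, fun w => ?_⟩
  have h := congrFun (congrArg Subtype.val hσ') w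
  exact h.symm

end auxFree


section auxRetract

variable {R : Type u} [NonUnitalRing R] {P : Type u} [AddCommGroup P] [LMod R P]
variable {ι : Type u} {rel : ι → ι → Prop}
variable (D : SplitSystem.{u, u} R ι rel) (c : LimitCocone R D P)

theorem retr_value_indep (htrans : ∀ {i j k}, rel i j → rel j k → rel i k)
    (hdir : ∀ i j, ∃ k, rel i k ∧ rel j k) {i j₁ j₂ k₁ k₂ : ι}
    (h₁ : rel j₁ k₁) (hik₁ : rel i k₁) (h₂ : rel j₂ k₂) (hik₂ : rel i k₂)
    {y₁ : (D.obj j₁).carrier} {y₂ : (D.obj j₂).carrier}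
    (hy : (c.incl j₁).1 y₁ = (c.incl j₂).1 y₂) :
    (D.split hik₁).1 ((D.map h₁).1 y₁) = (D.split hik₂).1 ((D.map h₂).1 y₂) := by
  obtain ⟨l, hk₁l, hk₂l⟩ := hdir k₁ k₂
  set m₁ := (D.map h₁).1 y₁ with hm₁
  set m₂ := (D.map h₂).1 y₂ with hm₂
  have hz : (c.incl l).1 ((D.map hk₁l).1 m₁ - (D.map hk₂l).1 m₂) = 0 := by
    rw [(c.incl l).2.map_sub, c.compat hk₁l m₁, c.compat hk₂l m₂, hm₁, hm₂,
      c.compat h₁ y₁, c.compat h₂ y₂, hy, sub_self]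
  obtain ⟨l', hll', hzero⟩ := c.eventually_zero l _ hz
  rw [(D.map hll').2.map_sub] at hzero
  have hml' : (D.map (htrans hk₁l hll')).1 m₁ = (D.map (htrans hk₂l hll')).1 m₂ := by
    have h' := sub_eq_zero.mp hzero
    rwa [D.map_map hk₁l hll' (htrans hk₁l hll'), D.map_map hk₂l hll' (htrans hk₂l hll')] at h'
  have e₁ : (D.split hik₁).1 m₁ =
      (D.split (htrans hik₁ (htrans hk₁l hll'))).1 ((D.map (htrans hk₁l hll')).1 m₁) := by
    conv_lhs => rw [← D.split_map (htrans hk₁l hll') m₁]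
    rw [D.split_split hik₁ (htrans hk₁l hll') (htrans hik₁ (htrans hk₁l hll'))]
  have e₂ : (D.split hik₂).1 m₂ =
      (D.split (htrans hik₂ (htrans hk₂l hll'))).1 ((D.map (htrans hk₂l hll')).1 m₂) := by
    conv_lhs => rw [← D.split_map (htrans hk₂l hll') m₂]
    rw [D.split_split hik₂ (htrans hk₂l hll') (htrans hik₂ (htrans hk₂l hll'))]
  rw [e₁, e₂, hml']

/-- The retraction `P → P_i` of the cocone map `P_i → P`. -/
noncomputable def retrFun (hdir : ∀ i j, ∃ k, rel i k ∧ rel j k) (i : ι) (p : P) :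
    (D.obj i).carrier :=
  (D.split (hdir i (c.exhaustive p).choose).choose_spec.1).1
    ((D.map (hdir i (c.exhaustive p).choose).choose_spec.2).1
      (c.exhaustive p).choose_spec.choose)

variable (htrans : ∀ {i j k}, rel i j → rel j k → rel i k)
  (hdir : ∀ i j, ∃ k, rel i k ∧ rel j k)

include htrans

theorem retrFun_eq (i : ι) (p : P) {j k : ι} (hjk : rel j k) (hik : rel i k)
    {y : (D.obj j).carrier} (hy : (c.incl j).1 y = p) :
    retrFun D c hdir i p = (D.split hik).1 ((D.map hjk).1 y) := by
  unfold retrFun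
  exact retr_value_indep D c htrans hdir _ _ _ _
    (by rw [(c.exhaustive p).choose_spec.choose_spec, hy])

theorem retrFun_incl (i : ι) (x : (D.obj i).carrier) :
    retrFun D c hdir i ((c.incl i).1 x) = x := by
  obtain ⟨k, hik, -⟩ := hdir i i
  rw [retrFun_eq D c htrans hdir i _ hik hik rfl]
  exact D.split_map hik x

theorem retrFun_add (hrefl : ∀ i, rel i i) (i : ι) (p q : P) :
    retrFun D c hdir i (p + q) = retrFun D c hdir i p + retrFun D c hdir i q := by
  obtain ⟨j₁, y₁, hy₁⟩ := c.exhaustive p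
  obtain ⟨j₂, y₂, hy₂⟩ := c.exhaustive q
  obtain ⟨k, hj₁k, hj₂k⟩ := hdir j₁ j₂
  obtain ⟨k', hik', hkk'⟩ := hdir i k
  have h1 : rel j₁ k' := htrans hj₁k hkk'
  have h2 : rel j₂ k' := htrans hj₂k hkk'
  have hy : (c.incl k').1 ((D.map h1).1 y₁ + (D.map h2).1 y₂) = p + q := by
    rw [(c.incl k').2.map_add, c.compat h1, c.compat h2, hy₁, hy₂]
  rw [retrFun_eq D c htrans hdir i _ (hrefl k') hik' hy,
    retrFun_eq D c htrans hdir i _ h1 hik' hy₁,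
    retrFun_eq D c htrans hdir i _ h2 hik' hy₂,
    D.map_self (hrefl k'), (D.split hik').2.map_add]

theorem retrFun_smul (i : ι) (r : R) (p : P) :
    retrFun D c hdir i (r • p) = r • retrFun D c hdir i p := by
  obtain ⟨j, y, hy⟩ := c.exhaustive p
  obtain ⟨k, hik, hjk⟩ := hdir i j
  have hy' : (c.incl j).1 (r • y) = r • p := by rw [(c.incl j).2.map_smul, hy]
  rw [retrFun_eq D c htrans hdir i _ hjk hik hy',
    retrFun_eq D c htrans hdir i _ hjk hik hy,
    (D.map hjk).2.map_smul, (D.split hik).2.map_smul]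

/-- The retraction as a module homomorphism. -/
noncomputable def retr (hrefl : ∀ i, rel i i) (i : ι) : LinMap R P (D.obj i).carrier :=
  ⟨retrFun D c hdir i,
   ⟨retrFun_add D c htrans hdir hrefl i, retrFun_smul D c htrans hdir i⟩⟩

include hdir in
theorem exists_common_index (hne : Nonempty ι) (s : Finset P) :
    ∃ i, ∀ x ∈ s, ∃ w : (D.obj i).carrier, (c.incl i).1 w = x := by
  classical
  induction s using Finset.induction with
  | empty => obtain ⟨i⟩ := hne; exact ⟨i, by simp⟩
  | @insert a s ha ih =>
    obtain ⟨i, hi⟩ := ih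
    obtain ⟨j, y, hy⟩ := c.exhaustive a
    obtain ⟨k, hik, hjk⟩ := hdir i j
    refine ⟨k, fun x hx => ?_⟩
    rcases Finset.mem_insert.mp hx with rfl | hx
    · exact ⟨(D.map hjk).1 y, by rw [c.compat hjk, hy]⟩
    · obtain ⟨w, hw⟩ := hi x hx
      exact ⟨(D.map hik).1 w, by rw [c.compat hik, hw]⟩

end auxRetract


section auxDB

variable {R S : Type u} [NonUnitalRing R] [NonUnitalRing S]
variable {P : Type u} [AddCommGroup P] [LMod R P] [LMod Sᵐᵒᵖ P] [SMulCommClass R Sᵐᵒᵖ P]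

/-- Dual basis property for an idempotent `f ∈ S`. -/
def DB (f : S) {n : ℕ} (y : Fin n → P) (γ : Fin n → LinMap R P R) : Prop :=
  ∀ x : P, (op f : Sᵐᵒᵖ) • x = ∑ t, (γ t).1 ((op f : Sᵐᵒᵖ) • x) • y t

theorem exists_dual_basis [HasLocalUnits R] (hlp : IsLocallyProjective R P)
    (hfg : ∀ f : S, f * f = f →
      IsFGSet R (Set.range (fun x : P => (op f : Sᵐᵒᵖ) • x)))
    (f : S) (hf : f * f = f) :
    ∃ (n : ℕ) (y : Fin n → P) (γ : Fin n → LinMap R P R), DB f y γ := by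
  obtain ⟨ι, rel, hrefl, htrans, hne, hdir, D, c, hprops⟩ := hlp
  obtain ⟨s, hs_sub, hs_gen⟩ := hfg f hf
  obtain ⟨i, hi⟩ := exists_common_index D c htrans hdir hne s
  let Rng : AddSubgroup P := {
    carrier := Set.range (c.incl i).1
    add_mem' := by rintro a b ⟨x, rfl⟩ ⟨y, rfl⟩; exact ⟨x + y, (c.incl i).2.map_add x y⟩
    zero_mem' := ⟨0, (c.incl i).2.map_zero⟩
    neg_mem' := by rintro a ⟨x, rfl⟩; exact ⟨-x, (c.incl i).2.map_neg x⟩ }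
  have hsub : ∀ a : P, a ∈ lspan R (↑s : Set P) → a ∈ Rng := by
    intro a ha
    refine (AddSubgroup.closure_le Rng).mpr ?_ ha
    rintro x (hx | ⟨r, x', hx', rfl⟩)
    · obtain ⟨w, hw⟩ := hi x hx; exact ⟨w, hw⟩
    · obtain ⟨w, hw⟩ := hi x' hx'
      exact ⟨r • w, by rw [(c.incl i).2.map_smul, hw]⟩
  have hrange : ∀ x : P, ∃ w : (D.obj i).carrier, (c.incl i).1 w = (op f : Sᵐᵒᵖ) • x :=
    fun x => hsub _ (hs_gen _ ⟨x, rfl⟩)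
  obtain ⟨n, z, σ, hdb⟩ :=
    exists_dual_basis_of_fg_projective (D.obj i) (hprops i).1 (hprops i).2
  let π := retr D c htrans hdir hrefl i
  refine ⟨n, fun t => (c.incl i).1 (z t),
    fun t => ⟨fun x => (σ t).1 (π.1 x),
      ⟨fun a b => by rw [π.2.map_add, (σ t).2.map_add],
       fun r a => by rw [π.2.map_smul, (σ t).2.map_smul]⟩⟩, ?_⟩
  intro x
  obtain ⟨w, hw⟩ := hrange x
  rw [← hw]
  have hπ : π.1 ((c.incl i).1 w) = w := retrFun_incl D c htrans hdir i w
  show (c.incl i).1 w = ∑ t, (σ t).1 (π.1 ((c.incl i).1 w)) • (c.incl i).1 (z t)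
  rw [hπ]
  conv_lhs => rw [hdb w]
  rw [lhom_sum (c.incl i).2]
  exact Finset.sum_congr rfl fun t _ => (c.incl i).2.map_smul _ _

end auxDB


section auxAdj

variable {R S : Type u} [NonUnitalRing R] [NonUnitalRing S]
variable {P : Type u} [AddCommGroup P] [LMod R P] [LMod Sᵐᵒᵖ P] [SMulCommClass R Sᵐᵒᵖ P]

theorem addmap_sum {A : Type v} {B : Type w} [AddCommGroup A] [AddCommGroup B] {f : A → B}
    (hf : ∀ a b, f (a + b) = f a + f b) {ι : Type*} (s : Finset ι) (g : ι → A) :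
    f (∑ i ∈ s, g i) = ∑ i ∈ s, f (g i) :=
  map_sum (AddMonoidHom.mk' f hf) g s

theorem umax_val_sum {C : Type u} [NonUnitalRing C] {H : Type v} [AddCommGroup H]
    [LMod C H] {ι : Type*} (s : Finset ι) (w : ι → ↥(umax C H)) :
    (∑ i ∈ s, w i : ↥(umax C H)).1 = ∑ i ∈ s, (w i).1 :=
  map_sum (umax C H).subtype w s

theorem rhomg_sum_apply {N : Type u} [AddCommGroup N] [LMod S N] {m : ℕ}
    (w : Fin m → RHomG R S P N) (δ : GP R S P) :
    ((∑ u, w u : RHomG R S P N)).1.1 δ = ∑ u, ((w u).1).1 δ := by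
  rw [umax_val_sum, linmap_sum_apply]

/-- The candidate counit value. -/
def adjVal {M N : Type u} [AddCommGroup M] [LMod R M] [AddCommGroup N] [LMod S N]
    (h : M → RHomG R S P N) (α₀ : LinMap R P M) (f : S) {n : ℕ}
    (y : Fin n → P) (γ : Fin n → LinMap R P R) : N :=
  ∑ t, ((h (α₀.1 (y t))).1).1 ⟨f • γ t, smul_mem_umax f (γ t)⟩

theorem adjVal_lemmaB {M N : Type u} [AddCommGroup M] [LMod R M] [AddCommGroup N] [LMod S N]
    (h : M → RHomG R S P N)
    (hh_add : ∀ a b, h (a + b) = h a + h b)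
    (hh_smul : ∀ (r : R) a, h (r • a) = r • h a)
    (α₀ : LinMap R P M) (f f' : S) {n n' : ℕ}
    {y : Fin n → P} {γ : Fin n → LinMap R P R}
    {y' : Fin n' → P} {γ' : Fin n' → LinMap R P R}
    (hDBf : DB f y γ) (hDBf' : DB f' y' γ')
    (hα' : ∀ x : P, α₀.1 ((op f' : Sᵐᵒᵖ) • x) = α₀.1 x) :
    adjVal h α₀ f y γ = adjVal h α₀ (f * f') y' γ' := by
  have step1 : ∀ t, α₀.1 (y t) =
      ∑ u, (γ' u).1 ((op f' : Sᵐᵒᵖ) • y t) • α₀.1 (y' u) := by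
    intro t
    conv_lhs => rw [← hα' (y t), hDBf' (y t)]
    rw [lhom_sum α₀.2]
    exact Finset.sum_congr rfl fun u _ => α₀.2.map_smul _ _
  have step2 : ∀ t, h (α₀.1 (y t)) =
      ∑ u, ((γ' u).1 ((op f' : Sᵐᵒᵖ) • y t)) • h (α₀.1 (y' u)) := by
    intro t
    calc h (α₀.1 (y t))
        = h (∑ u, (γ' u).1 ((op f' : Sᵐᵒᵖ) • y t) • α₀.1 (y' u)) := by rw [step1 t]
      _ = ∑ u, h ((γ' u).1 ((op f' : Sᵐᵒᵖ) • y t) • α₀.1 (y' u)) := addmap_sum hh_add _ _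
      _ = ∑ u, ((γ' u).1 ((op f' : Sᵐᵒᵖ) • y t)) • h (α₀.1 (y' u)) :=
          Finset.sum_congr rfl fun u _ => hh_smul _ _
  have inner : ∀ u, (∑ t, ((op ((γ' u).1 ((op f' : Sᵐᵒᵖ) • y t)) : Rᵐᵒᵖ) •
        (⟨f • γ t, smul_mem_umax f (γ t)⟩ : GP R S P)))
      = (⟨(f * f') • γ' u, smul_mem_umax (f * f') (γ' u)⟩ : GP R S P) := by
    intro u
    refine Subtype.ext ?_
    rw [umax_val_sum]
    refine LinMap.ext (funext fun x => ?_)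
    rw [linmap_sum_apply]
    show ∑ t, ((γ t).1 ((op f : Sᵐᵒᵖ) • x)) * ((γ' u).1 ((op f' : Sᵐᵒᵖ) • y t))
        = (γ' u).1 ((op (f * f') : Sᵐᵒᵖ) • x)
    have rhs_eq : (γ' u).1 ((op (f * f') : Sᵐᵒᵖ) • x)
        = ∑ t, ((γ t).1 ((op f : Sᵐᵒᵖ) • x)) * ((γ' u).1 ((op f' : Sᵐᵒᵖ) • y t)) := by
      rw [MulOpposite.op_mul, LMod.mul_smul']
      conv_lhs => rw [hDBf x]
      rw [lsmul_sum, lhom_sum (γ' u).2]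
      refine Finset.sum_congr rfl fun t _ => ?_
      rw [← smul_comm ((γ t).1 ((op f : Sᵐᵒᵖ) • x)) (op f' : Sᵐᵒᵖ) (y t)]
      exact (γ' u).2.map_smul _ _
    rw [rhs_eq]
  unfold adjVal
  calc ∑ t, ((h (α₀.1 (y t))).1).1 ⟨f • γ t, smul_mem_umax f (γ t)⟩
      = ∑ t, ∑ u, ((h (α₀.1 (y' u))).1).1
          ((op ((γ' u).1 ((op f' : Sᵐᵒᵖ) • y t)) : Rᵐᵒᵖ) •
            ⟨f • γ t, smul_mem_umax f (γ t)⟩) := by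
        refine Finset.sum_congr rfl fun t _ => ?_
        rw [step2 t, rhomg_sum_apply]
        exact Finset.sum_congr rfl fun u _ => rfl
    _ = ∑ u, ∑ t, ((h (α₀.1 (y' u))).1).1
          ((op ((γ' u).1 ((op f' : Sᵐᵒᵖ) • y t)) : Rᵐᵒᵖ) •
            ⟨f • γ t, smul_mem_umax f (γ t)⟩) := Finset.sum_comm
    _ = ∑ u, ((h (α₀.1 (y' u))).1).1 (∑ t,
          (op ((γ' u).1 ((op f' : Sᵐᵒᵖ) • y t)) : Rᵐᵒᵖ) •
            (⟨f • γ t, smul_mem_umax f (γ t)⟩ : GP R S P)) := by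
        refine Finset.sum_congr rfl fun u _ => ?_
        exact (lhom_sum ((h (α₀.1 (y' u))).1).2 _ _).symm
    _ = ∑ u, ((h (α₀.1 (y' u))).1).1 ⟨(f * f') • γ' u, smul_mem_umax (f * f') (γ' u)⟩ := by
        refine Finset.sum_congr rfl fun u _ => ?_
        rw [inner u]

theorem adjVal_indep [HasLocalUnits S] {M N : Type u} [AddCommGroup M] [LMod R M]
    [AddCommGroup N] [LMod S N]
    (h : M → RHomG R S P N)
    (hh_add : ∀ a b, h (a + b) = h a + h b)
    (hh_smul : ∀ (r : R) a, h (r • a) = r • h a)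
    (α₀ : LinMap R P M)
    (hDBex : ∀ g : S, g * g = g →
      ∃ (n : ℕ) (y : Fin n → P) (γ : Fin n → LinMap R P R), DB g y γ)
    {f1 f2 : S} {n1 n2 : ℕ}
    {y1 : Fin n1 → P} {γ1 : Fin n1 → LinMap R P R}
    {y2 : Fin n2 → P} {γ2 : Fin n2 → LinMap R P R}
    (hα1 : ∀ x : P, α₀.1 ((op f1 : Sᵐᵒᵖ) • x) = α₀.1 x) (hdb1 : DB f1 y1 γ1)
    (hα2 : ∀ x : P, α₀.1 ((op f2 : Sᵐᵒᵖ) • x) = α₀.1 x) (hdb2 : DB f2 y2 γ2) :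
    adjVal h α₀ f1 y1 γ1 = adjVal h α₀ f2 y2 γ2 := by
  classical
  obtain ⟨e, he, hu⟩ := HasLocalUnits.exists_unit {f1, f2}
  obtain ⟨m, ye, γe, hdbe⟩ := hDBex e he
  have A1 : adjVal h α₀ e ye γe = adjVal h α₀ (e * f1) y1 γ1 :=
    adjVal_lemmaB h hh_add hh_smul α₀ e f1 hdbe hdb1 hα1
  have A2 : adjVal h α₀ e ye γe = adjVal h α₀ (e * f2) y2 γ2 :=
    adjVal_lemmaB h hh_add hh_smul α₀ e f2 hdbe hdb2 hα2
  rw [(hu f1 (by simp)).1] at A1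
  rw [(hu f2 (by simp)).1] at A2
  rw [← A1, A2]

theorem exists_valid_choice [HasLocalUnits S] {M : Type u} [AddCommGroup M] [LMod R M]
    (hDBex : ∀ g : S, g * g = g →
      ∃ (n : ℕ) (y : Fin n → P) (γ : Fin n → LinMap R P R), DB g y γ)
    (α : SHom R S P M) :
    ∃ (f : S) (n : ℕ) (y : Fin n → P) (γ : Fin n → LinMap R P R),
      f * f = f ∧ (∀ x : P, (α.1).1 ((op f : Sᵐᵒᵖ) • x) = (α.1).1 x) ∧ DB f y γ := by
  obtain ⟨f, hf, hfa⟩ := exists_idem_smul_eq α.2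
  obtain ⟨n, y, γ, hdb⟩ := hDBex f hf
  exact ⟨f, n, y, γ, hf,
    fun x => congrFun (congrArg Subtype.val hfa) x, hdb⟩

/-- The inverse hom-equivalence map (counit direction). -/
noncomputable def thetaFun [HasLocalUnits S] {M N : Type u} [AddCommGroup M] [LMod R M]
    [AddCommGroup N] [LMod S N]
    (hDBex : ∀ g : S, g * g = g →
      ∃ (n : ℕ) (y : Fin n → P) (γ : Fin n → LinMap R P R), DB g y γ)
    (h : M → RHomG R S P N) (α : SHom R S P M) : N :=
  adjVal h α.1 (exists_valid_choice hDBex α).choose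
    (exists_valid_choice hDBex α).choose_spec.choose_spec.choose
    (exists_valid_choice hDBex α).choose_spec.choose_spec.choose_spec.choose

theorem thetaFun_eq [HasLocalUnits S] {M N : Type u} [AddCommGroup M] [LMod R M]
    [AddCommGroup N] [LMod S N]
    (hDBex : ∀ g : S, g * g = g →
      ∃ (n : ℕ) (y : Fin n → P) (γ : Fin n → LinMap R P R), DB g y γ)
    (h : M → RHomG R S P N)
    (hh_add : ∀ a b, h (a + b) = h a + h b)
    (hh_smul : ∀ (r : R) a, h (r • a) = r • h a)
    (α : SHom R S P M) {f : S} {n : ℕ} {y : Fin n → P} {γ : Fin n → LinMap R P R}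
    (hα : ∀ x : P, (α.1).1 ((op f : Sᵐᵒᵖ) • x) = (α.1).1 x) (hdb : DB f y γ) :
    thetaFun hDBex h α = adjVal h α.1 f y γ := by
  have hprops :=
    (exists_valid_choice hDBex α).choose_spec.choose_spec.choose_spec.choose_spec
  exact adjVal_indep h hh_add hh_smul α.1 hDBex hprops.2.1 hprops.2.2 hα hdb

theorem absorb {M : Type u} [AddCommGroup M] [LMod R M] {F : LinMap R P M} {g e : S}
    (heg : e * g = g) (hg : ∀ x : P, F.1 ((op g : Sᵐᵒᵖ) • x) = F.1 x) :
    ∀ x : P, F.1 ((op e : Sᵐᵒᵖ) • x) = F.1 x := by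
  intro x
  have h1 : (op g : Sᵐᵒᵖ) • ((op e : Sᵐᵒᵖ) • x) = (op g : Sᵐᵒᵖ) • x := by
    rw [← LMod.mul_smul', ← MulOpposite.op_mul, heg]
  rw [← hg ((op e : Sᵐᵒᵖ) • x), h1, hg x]

theorem thetaFun_add [HasLocalUnits S] {M N : Type u} [AddCommGroup M] [LMod R M]
    [AddCommGroup N] [LMod S N]
    (hDBex : ∀ g : S, g * g = g →
      ∃ (n : ℕ) (y : Fin n → P) (γ : Fin n → LinMap R P R), DB g y γ)
    (h : M → RHomG R S P N)
    (hh_add : ∀ a b, h (a + b) = h a + h b)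
    (hh_smul : ∀ (r : R) a, h (r • a) = r • h a)
    (α β : SHom R S P M) :
    thetaFun hDBex h (α + β) = thetaFun hDBex h α + thetaFun hDBex h β := by
  classical
  obtain ⟨f1, n1, y1, γ1, hf1, hα1, hdb1⟩ := exists_valid_choice hDBex α
  obtain ⟨f2, n2, y2, γ2, hf2, hα2, hdb2⟩ := exists_valid_choice hDBex β
  obtain ⟨e, he, hu⟩ := HasLocalUnits.exists_unit {f1, f2}
  obtain ⟨m, ye, γe, hdbe⟩ := hDBex e he
  have hαe : ∀ x : P, (α.1).1 ((op e : Sᵐᵒᵖ) • x) = (α.1).1 x :=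
    absorb (hu f1 (by simp)).1 hα1
  have hβe : ∀ x : P, (β.1).1 ((op e : Sᵐᵒᵖ) • x) = (β.1).1 x :=
    absorb (hu f2 (by simp)).1 hα2
  have hsum : ∀ x : P, ((α + β).1).1 ((op e : Sᵐᵒᵖ) • x) = ((α + β).1).1 x := by
    intro x
    show (α.1).1 ((op e : Sᵐᵒᵖ) • x) + (β.1).1 ((op e : Sᵐᵒᵖ) • x)
        = (α.1).1 x + (β.1).1 x
    rw [hαe, hβe]
  rw [thetaFun_eq hDBex h hh_add hh_smul (α + β) hsum hdbe,
    thetaFun_eq hDBex h hh_add hh_smul α hαe hdbe,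
    thetaFun_eq hDBex h hh_add hh_smul β hβe hdbe]
  unfold adjVal
  rw [← Finset.sum_add_distrib]
  refine Finset.sum_congr rfl fun t _ => ?_
  show ((h ((α.1).1 (ye t) + (β.1).1 (ye t))).1).1 _ = _
  rw [hh_add]
  rfl

theorem thetaFun_smul [HasLocalUnits S] {M N : Type u} [AddCommGroup M] [LMod R M]
    [AddCommGroup N] [LMod S N]
    (hDBex : ∀ g : S, g * g = g →
      ∃ (n : ℕ) (y : Fin n → P) (γ : Fin n → LinMap R P R), DB g y γ)
    (h : M → RHomG R S P N)
    (hh_add : ∀ a b, h (a + b) = h a + h b)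
    (hh_smul : ∀ (r : R) a, h (r • a) = r • h a)
    (s : S) (α : SHom R S P M) :
    thetaFun hDBex h (s • α) = s • thetaFun hDBex h α := by
  classical
  obtain ⟨f1, n1, y1, γ1, hf1, hα1, hdb1⟩ := exists_valid_choice hDBex α
  obtain ⟨e, he, hu⟩ := HasLocalUnits.exists_unit {s, f1}
  have hes : e * s = s := (hu s (by simp)).1
  have hse : s * e = s := (hu s (by simp)).2
  obtain ⟨m, ye, γe, hdbe⟩ := hDBex e he
  have hαe : ∀ x : P, (α.1).1 ((op e : Sᵐᵒᵖ) • x) = (α.1).1 x :=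
    absorb (hu f1 (by simp)).1 hα1
  have hfixs' : ∀ p : P, (op s : Sᵐᵒᵖ) • ((op e : Sᵐᵒᵖ) • p) = (op s : Sᵐᵒᵖ) • p :=
    fun p => by rw [← LMod.mul_smul', ← MulOpposite.op_mul, hes]
  have hfixs : ∀ p : P, (op e : Sᵐᵒᵖ) • ((op s : Sᵐᵒᵖ) • p) = (op s : Sᵐᵒᵖ) • p :=
    fun p => by rw [← LMod.mul_smul', ← MulOpposite.op_mul, hse]
  have hsα : ∀ x : P, ((s • α).1).1 ((op e : Sᵐᵒᵖ) • x) = ((s • α).1).1 x := by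
    intro x
    show (α.1).1 ((op s : Sᵐᵒᵖ) • ((op e : Sᵐᵒᵖ) • x)) = (α.1).1 ((op s : Sᵐᵒᵖ) • x)
    rw [hfixs' x]
  have hx : ∀ p : P, (op s : Sᵐᵒᵖ) • p = ∑ t, (γe t).1 ((op s : Sᵐᵒᵖ) • p) • ye t := by
    intro p
    have h0 := hdbe ((op s : Sᵐᵒᵖ) • p)
    rwa [hfixs p] at h0
  rw [thetaFun_eq hDBex h hh_add hh_smul (s • α) hsα hdbe,
    thetaFun_eq hDBex h hh_add hh_smul α hαe hdbe]
  unfold adjVal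
  rw [lsmul_sum]
  have rhs_t : ∀ t, s • ((h ((α.1).1 (ye t))).1).1 ⟨e • γe t, smul_mem_umax e (γe t)⟩
      = ((h ((α.1).1 (ye t))).1).1 ⟨s • γe t, smul_mem_umax s (γe t)⟩ := by
    intro t
    rw [← ((h ((α.1).1 (ye t))).1).2.map_smul s _]
    refine congrArg _ (Subtype.ext ?_)
    show s • (e • γe t) = s • γe t
    rw [← LMod.mul_smul', hse]
  have step1 : ∀ u, ((s • α).1).1 (ye u)
      = ∑ t, (γe t).1 ((op s : Sᵐᵒᵖ) • ye u) • (α.1).1 (ye t) := by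
    intro u
    show (α.1).1 ((op s : Sᵐᵒᵖ) • ye u) = _
    conv_lhs => rw [hx (ye u)]
    rw [lhom_sum (α.1).2]
    exact Finset.sum_congr rfl fun t _ => (α.1).2.map_smul _ _
  have step2 : ∀ u, h (((s • α).1).1 (ye u))
      = ∑ t, ((γe t).1 ((op s : Sᵐᵒᵖ) • ye u)) • h ((α.1).1 (ye t)) := by
    intro u
    calc h (((s • α).1).1 (ye u))
        = h (∑ t, (γe t).1 ((op s : Sᵐᵒᵖ) • ye u) • (α.1).1 (ye t)) := by rw [step1 u]
      _ = ∑ t, h ((γe t).1 ((op s : Sᵐᵒᵖ) • ye u) • (α.1).1 (ye t)) := addmap_sum hh_add _ _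
      _ = ∑ t, ((γe t).1 ((op s : Sᵐᵒᵖ) • ye u)) • h ((α.1).1 (ye t)) :=
          Finset.sum_congr rfl fun t _ => hh_smul _ _
  have inner2 : ∀ t, (∑ u, ((op ((γe t).1 ((op s : Sᵐᵒᵖ) • ye u)) : Rᵐᵒᵖ) •
        (⟨e • γe u, smul_mem_umax e (γe u)⟩ : GP R S P)))
      = (⟨s • γe t, smul_mem_umax s (γe t)⟩ : GP R S P) := by
    intro t
    refine Subtype.ext ?_
    rw [umax_val_sum]
    refine LinMap.ext (funext fun x => ?_)
    rw [linmap_sum_apply]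
    show ∑ u, ((γe u).1 ((op e : Sᵐᵒᵖ) • x)) * ((γe t).1 ((op s : Sᵐᵒᵖ) • ye u))
        = (γe t).1 ((op s : Sᵐᵒᵖ) • x)
    have rhs_eq : (γe t).1 ((op s : Sᵐᵒᵖ) • x)
        = ∑ u, ((γe u).1 ((op e : Sᵐᵒᵖ) • x)) * ((γe t).1 ((op s : Sᵐᵒᵖ) • ye u)) := by
      conv_lhs => rw [← hfixs' x, hdbe x]
      rw [lsmul_sum, lhom_sum (γe t).2]
      refine Finset.sum_congr rfl fun u _ => ?_
      rw [← smul_comm ((γe u).1 ((op e : Sᵐᵒᵖ) • x)) (op s : Sᵐᵒᵖ) (ye u)]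
      exact (γe t).2.map_smul _ _
    rw [rhs_eq]
  calc ∑ u, ((h (((s • α).1).1 (ye u))).1).1 ⟨e • γe u, smul_mem_umax e (γe u)⟩
      = ∑ u, ∑ t, ((h ((α.1).1 (ye t))).1).1
          ((op ((γe t).1 ((op s : Sᵐᵒᵖ) • ye u)) : Rᵐᵒᵖ) •
            ⟨e • γe u, smul_mem_umax e (γe u)⟩) := by
        refine Finset.sum_congr rfl fun u _ => ?_
        rw [step2 u, rhomg_sum_apply]
        exact Finset.sum_congr rfl fun t _ => rfl
    _ = ∑ t, ∑ u, ((h ((α.1).1 (ye t))).1).1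
          ((op ((γe t).1 ((op s : Sᵐᵒᵖ) • ye u)) : Rᵐᵒᵖ) •
            ⟨e • γe u, smul_mem_umax e (γe u)⟩) := Finset.sum_comm
    _ = ∑ t, ((h ((α.1).1 (ye t))).1).1 (∑ u,
          (op ((γe t).1 ((op s : Sᵐᵒᵖ) • ye u)) : Rᵐᵒᵖ) •
            (⟨e • γe u, smul_mem_umax e (γe u)⟩ : GP R S P)) := by
        refine Finset.sum_congr rfl fun t _ => ?_
        exact (lhom_sum ((h ((α.1).1 (ye t))).1).2 _ _).symm
    _ = ∑ t, ((h ((α.1).1 (ye t))).1).1 ⟨s • γe t, smul_mem_umax s (γe t)⟩ := by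
        refine Finset.sum_congr rfl fun t _ => ?_
        rw [inner2 t]
    _ = ∑ t, s • ((h ((α.1).1 (ye t))).1).1 ⟨e • γe t, smul_mem_umax e (γe t)⟩ := by
        refine Finset.sum_congr rfl fun t _ => ?_
        rw [rhs_t t]

end auxAdj


section auxFinal

variable {R S : Type u} [NonUnitalRing R] [NonUnitalRing S]
  [HasLocalUnits R] [HasLocalUnits S]
variable {P : Type u} [AddCommGroup P] [LMod R P] [LMod Sᵐᵒᵖ P] [SMulCommClass R Sᵐᵒᵖ P]

/-- The forward hom-equivalence map. -/
def xiFun {M : UMod.{u, u} R} {N : UMod.{u, u} S}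
    (g : (sHomF R S P).obj M ⟶ N) (m : M.carrier) :
    LinMap S (GP R S P) N.carrier :=
  ⟨fun β => g.1 ⟨gammaInner m β.1, gammaInner_mem m β.2⟩,
   ⟨fun β β' => by
      refine Eq.trans ?_ (g.2.map_add _ _)
      exact congrArg g.1 (Subtype.ext (LinMap.ext (funext fun x => LMod.add_smul' _ _ _))),
    fun s β => by
      refine Eq.trans ?_ (g.2.map_smul _ _)
      exact congrArg g.1 (Subtype.ext (LinMap.ext (funext fun x => rfl)))⟩⟩

theorem xiFun_add {M : UMod.{u, u} R} {N : UMod.{u, u} S}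
    (g : (sHomF R S P).obj M ⟶ N) (a b : M.carrier) :
    xiFun g (a + b) = xiFun g a + xiFun g b := by
  refine LinMap.ext (funext fun β => ?_)
  show g.1 _ = g.1 _ + g.1 _
  refine Eq.trans ?_ (g.2.map_add _ _)
  exact congrArg g.1 (Subtype.ext (LinMap.ext (funext fun x => LMod.smul_add' _ _ _)))

theorem xiFun_smul {M : UMod.{u, u} R} {N : UMod.{u, u} S}
    (g : (sHomF R S P).obj M ⟶ N) (r : R) (a : M.carrier) :
    xiFun g (r • a) = r • xiFun g a := by
  refine LinMap.ext (funext fun β => ?_)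
  exact congrArg g.1 (Subtype.ext (LinMap.ext (funext fun x =>
    (LMod.mul_smul' ((β.1).1 x) r a).symm)))

theorem xiFun_mem {M : UMod.{u, u} R} {N : UMod.{u, u} S}
    (g : (sHomF R S P).obj M ⟶ N) (m : M.carrier) :
    xiFun g m ∈ umax R (LinMap S (GP R S P) N.carrier) :=
  umax_mapsTo (xiFun g) (xiFun_add g) (xiFun_smul g) (M.unitary m)

/-- The forward hom-equivalence as a morphism. -/
def xiHom {M : UMod.{u, u} R} {N : UMod.{u, u} S}
    (g : (sHomF R S P).obj M ⟶ N) : M ⟶ (rHomGF R S P).obj N :=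
  ⟨fun m => ⟨xiFun g m, xiFun_mem g m⟩,
   ⟨fun a b => Subtype.ext (xiFun_add g a b),
    fun r a => Subtype.ext (xiFun_smul g r a)⟩⟩

/-- The inverse hom-equivalence as a morphism. -/
noncomputable def thetaHom {M : UMod.{u, u} R} {N : UMod.{u, u} S}
    (hDBex : ∀ g : S, g * g = g →
      ∃ (n : ℕ) (y : Fin n → P) (γ : Fin n → LinMap R P R), DB g y γ)
    (h : M ⟶ (rHomGF R S P).obj N) : (sHomF R S P).obj M ⟶ N :=
  ⟨thetaFun hDBex h.1,
   ⟨thetaFun_add hDBex h.1 h.2.map_add h.2.map_smul,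
    fun s α => thetaFun_smul hDBex h.1 h.2.map_add h.2.map_smul s α⟩⟩

theorem theta_xi {M : UMod.{u, u} R} {N : UMod.{u, u} S}
    (hDBex : ∀ g : S, g * g = g →
      ∃ (n : ℕ) (y : Fin n → P) (γ : Fin n → LinMap R P R), DB g y γ)
    (g : (sHomF R S P).obj M ⟶ N) : thetaHom hDBex (xiHom g) = g := by
  refine LinMap.ext (funext fun α => ?_)
  obtain ⟨f, n, y, γ, hf, hα, hdb⟩ := exists_valid_choice (M := M.carrier) hDBex α
  show thetaFun hDBex (xiHom g).1 α = g.1 α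
  rw [thetaFun_eq hDBex (xiHom g).1 (xiHom g).2.map_add (xiHom g).2.map_smul α hα hdb]
  unfold adjVal
  have key : (∑ t, (⟨gammaInner ((α.1).1 (y t)) (f • γ t),
        gammaInner_mem _ (smul_mem_umax f (γ t))⟩ : SHom R S P M.carrier)) = α := by
    refine Subtype.ext ?_
    rw [umax_val_sum]
    refine LinMap.ext (funext fun x => ?_)
    rw [linmap_sum_apply]
    show ∑ t, ((γ t).1 ((op f : Sᵐᵒᵖ) • x)) • (α.1).1 (y t) = (α.1).1 x
    rw [← hα x]
    conv_rhs => rw [hdb x]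
    rw [lhom_sum (α.1).2]
    exact Finset.sum_congr rfl fun t _ => ((α.1).2.map_smul _ _).symm
  calc ∑ t, (((xiHom g).1 ((α.1).1 (y t))).1).1 ⟨f • γ t, smul_mem_umax f (γ t)⟩
      = ∑ t, g.1 ⟨gammaInner ((α.1).1 (y t)) (f • γ t),
          gammaInner_mem _ (smul_mem_umax f (γ t))⟩ := rfl
    _ = g.1 (∑ t, (⟨gammaInner ((α.1).1 (y t)) (f • γ t),
          gammaInner_mem _ (smul_mem_umax f (γ t))⟩ : SHom R S P M.carrier)) :=
        (addmap_sum g.2.map_add _ _).symm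
    _ = g.1 α := congrArg g.1 key

theorem xi_theta {M : UMod.{u, u} R} {N : UMod.{u, u} S}
    (hDBex : ∀ g : S, g * g = g →
      ∃ (n : ℕ) (y : Fin n → P) (γ : Fin n → LinMap R P R), DB g y γ)
    (h : M ⟶ (rHomGF R S P).obj N) : xiHom (thetaHom hDBex h) = h := by
  refine LinMap.ext (funext fun m => Subtype.ext (LinMap.ext (funext fun β => ?_)))
  show thetaFun hDBex h.1 ⟨gammaInner m β.1, gammaInner_mem m β.2⟩ = ((h.1 m).1).1 β
  obtain ⟨f', hf', hβ⟩ := exists_idem_smul_eq β.2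
  obtain ⟨n, y, γ, hdb⟩ := hDBex f' hf'
  have hαβ : ∀ x : P,
      ((⟨gammaInner m β.1, gammaInner_mem m β.2⟩ : SHom R S P M.carrier).1).1
        ((op f' : Sᵐᵒᵖ) • x)
      = ((⟨gammaInner m β.1, gammaInner_mem m β.2⟩ : SHom R S P M.carrier).1).1 x := by
    intro x
    exact congrArg (fun r : R => r • m) (congrFun (congrArg Subtype.val hβ) x)
  rw [thetaFun_eq hDBex h.1 h.2.map_add h.2.map_smul _ hαβ hdb]
  unfold adjVal
  calc ∑ t, ((h.1 (((⟨gammaInner m β.1, gammaInner_mem m β.2⟩ :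
          SHom R S P M.carrier).1).1 (y t))).1).1 ⟨f' • γ t, smul_mem_umax f' (γ t)⟩
      = ∑ t, ((h.1 m).1).1 ((op ((β.1).1 (y t)) : Rᵐᵒᵖ) •
          ⟨f' • γ t, smul_mem_umax f' (γ t)⟩) := by
        refine Finset.sum_congr rfl fun t _ => ?_
        show ((h.1 (((β.1).1 (y t)) • m)).1).1 ⟨f' • γ t, smul_mem_umax f' (γ t)⟩ = _
        rw [h.2.map_smul ((β.1).1 (y t)) m]
        rfl
    _ = ((h.1 m).1).1 (∑ t, (op ((β.1).1 (y t)) : Rᵐᵒᵖ) •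
          (⟨f' • γ t, smul_mem_umax f' (γ t)⟩ : GP R S P)) :=
        (lhom_sum ((h.1 m).1).2 _ _).symm
    _ = ((h.1 m).1).1 β := by
        refine congrArg _ (Subtype.ext ?_)
        rw [umax_val_sum]
        refine LinMap.ext (funext fun x => ?_)
        rw [linmap_sum_apply]
        show ∑ t, ((γ t).1 ((op f' : Sᵐᵒᵖ) • x)) * ((β.1).1 (y t)) = (β.1).1 x
        have e1 : (β.1).1 ((op f' : Sᵐᵒᵖ) • x) = (β.1).1 x :=
          congrFun (congrArg Subtype.val hβ) x
        rw [← e1]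
        conv_rhs => rw [hdb x]
        rw [lhom_sum (β.1).2]
        exact Finset.sum_congr rfl fun t _ => ((β.1).2.map_smul _ _).symm

theorem theta_nat {M' M : UMod.{u, u} R} {N : UMod.{u, u} S}
    (hDBex : ∀ g : S, g * g = g →
      ∃ (n : ℕ) (y : Fin n → P) (γ : Fin n → LinMap R P R), DB g y γ)
    (f : M' ⟶ M) (h : M ⟶ (rHomGF R S P).obj N) :
    thetaHom hDBex (f ≫ h) = (sHomF R S P).map f ≫ thetaHom hDBex h := by
  refine LinMap.ext (funext fun α => ?_)
  obtain ⟨f1, n, y, γ, hf1, hα, hdb⟩ := exists_valid_choice (M := M'.carrier) hDBex α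
  show thetaFun hDBex (f ≫ h).1 α = thetaFun hDBex h.1 (((sHomF R S P).map f).1 α)
  have hα2 : ∀ x : P, (((((sHomF R S P).map f).1 α)).1).1 ((op f1 : Sᵐᵒᵖ) • x)
      = (((((sHomF R S P).map f).1 α)).1).1 x := by
    intro x
    show f.1 ((α.1).1 ((op f1 : Sᵐᵒᵖ) • x)) = f.1 ((α.1).1 x)
    rw [hα x]
  rw [thetaFun_eq hDBex (f ≫ h).1 (f ≫ h).2.map_add (f ≫ h).2.map_smul α hα hdb,
    thetaFun_eq hDBex h.1 h.2.map_add h.2.map_smul _ hα2 hdb]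
  rfl

theorem xi_nat {M : UMod.{u, u} R} {N N' : UMod.{u, u} S}
    (g : (sHomF R S P).obj M ⟶ N) (k : N ⟶ N') :
    xiHom (g ≫ k) = xiHom g ≫ (rHomGF R S P).map k :=
  LinMap.ext (funext fun m => Subtype.ext (LinMap.ext (funext fun β => rfl)))

end auxFinal

/-! ## STATEMENT 8
`RHom_S(G_P,−)` is a right adjoint of `SHom_R(P,−)`, where `G_P = SHom_R(P,R)`. -/
theorem rHomG_right_adjoint_of_sHom
    (R S : Type u) [NonUnitalRing R] [NonUnitalRing S]
    [HasLocalUnits R] [HasLocalUnits S]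
    (P : Type u) [AddCommGroup P] [LMod R P] [LMod Sᵐᵒᵖ P] [SMulCommClass R Sᵐᵒᵖ P]
    (hlp : IsLocallyProjective R P)
    (hfg : ∀ f : S, f * f = f →
      IsFGSet R (Set.range (fun x : P => (MulOpposite.op f : Sᵐᵒᵖ) • x))) :
    Nonempty (sHomF R S P ⊣ rHomGF R S P) := by
  have hDBex : ∀ g : S, g * g = g →
      ∃ (n : ℕ) (y : Fin n → P) (γ : Fin n → LinMap R P R), DB g y γ :=
    fun g hg => exists_dual_basis hlp hfg g hg
  exact ⟨Adjunction.mkOfHomEquiv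
    { homEquiv := fun M N =>
        { toFun := xiHom
          invFun := thetaHom hDBex
          left_inv := theta_xi hDBex
          right_inv := xi_theta hDBex }
      homEquiv_naturality_left_symm := fun f g => theta_nat hDBex f g
      homEquiv_naturality_right := fun f g => xi_nat f g }⟩
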